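/- arXiv:1608.05867 — 5 statements merged into one kernel-verified Lean document; each statement's English description precedes it below -/
import Mathlib

section
/- For every natural number n, every vector x ∈ V having both the K₅-property and the 2K₃-property belongs to the span W of the vectors w₍e,v₎. Hence W is exactly the subspace of all vectors in V having both the K₅-property and the 2K₃-property. (This is the algebraic core of the characterization of independently ℤ₂-realizable complete AT-graphs.) -/
open scoped Classical

/-- The set `P` of unordered pairs of independent edges of `Kₙ`: pairs `{e, f}`
where `e, f` are disjoint 2-element subsets of `Fin n`. -/
def ATP (n : ℕ) : Set (Sym2 (Finset (Fin n))) :=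
  {p | ∃ e f : Finset (Fin n), p = s(e, f) ∧ e.card = 2 ∧ f.card = 2 ∧ Disjoint e f}

/-- The `ZMod 2`-vector space `V` of functions `P → ZMod 2`. -/
abbrev ATV (n : ℕ) := ↥(ATP n) → ZMod 2

/-- The vector `w₍e,v₎ ∈ V`: its coordinate at a pair `{e, f} ∈ P` is `1` exactly
when `v ∈ f`, and its coordinates at pairs not containing `e` are `0`. -/
noncomputable def atw (n : ℕ) (e : Finset (Fin n)) (v : Fin n) : ATV n := fun p =>
  if ∃ f : Finset (Fin n), (p : Sym2 (Finset (Fin n))) = s(e, f) ∧ v ∈ f then 1 else 0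

/-- The `ZMod 2`-span `W` of the vectors `w₍e,v₎` over all edges `e` and
vertices `v ∉ e`. -/
noncomputable def ATW (n : ℕ) : Submodule (ZMod 2) (ATV n) :=
  Submodule.span (ZMod 2)
    {y | ∃ (e : Finset (Fin n)) (v : Fin n), e.card = 2 ∧ v ∉ e ∧ y = atw n e v}

/-- `x` has the `K₅`-property: for every 5-element `S ⊆ Fin n`, the sum of `x` over
all pairs `{e, f} ∈ P` with `e ⊆ S` and `f ⊆ S` is `0`. -/
def HasK5 (n : ℕ) (x : ATV n) : Prop :=
  ∀ S : Finset (Fin n), S.card = 5 →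
    ∑ p : ATP n,
      (if ∀ e ∈ (p : Sym2 (Finset (Fin n))), e ⊆ S then x p else 0) = 0

/-- `x` has the `2K₃`-property: for every pair of disjoint 3-element subsets
`T₁, T₂` of `Fin n`, the sum of `x` over all pairs `{e, f} ∈ P` with `e ⊆ T₁` and
`f ⊆ T₂` is `0`. -/
def Has2K3 (n : ℕ) (x : ATV n) : Prop :=
  ∀ T₁ T₂ : Finset (Fin n), T₁.card = 3 → T₂.card = 3 → Disjoint T₁ T₂ →
    ∑ p : ATP n,
      (if ∃ e f : Finset (Fin n),
          (p : Sym2 (Finset (Fin n))) = s(e, f) ∧ e ⊆ T₁ ∧ f ⊆ T₂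
        then x p else 0) = 0

namespace AT9

variable {n : ℕ}

abbrev Edge (n : ℕ) := Finset (Fin n)

lemma mem_ATP_iff {e f : Edge n} :
    s(e, f) ∈ ATP n ↔ e.card = 2 ∧ f.card = 2 ∧ Disjoint e f := by
  constructor
  · rintro ⟨e', f', hp, he', hf', hd'⟩
    rcases Sym2.eq_iff.1 hp with ⟨rfl, rfl⟩ | ⟨rfl, rfl⟩
    · exact ⟨he', hf', hd'⟩
    · exact ⟨hf', he', hd'.symm⟩
  · rintro ⟨he, hf, hd⟩
    exact ⟨e, f, rfl, he, hf, hd⟩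

/-- The coordinate of `x` at the (possibly invalid) pair `{e,f}`. -/
noncomputable def co (x : ATV n) (e f : Edge n) : ZMod 2 :=
  if h : s(e, f) ∈ ATP n then x ⟨s(e, f), h⟩ else 0

lemma co_valid (x : ATV n) {e f : Edge n} (h : s(e, f) ∈ ATP n) :
    co x e f = x ⟨s(e, f), h⟩ := dif_pos h

lemma co_symm (x : ATV n) (e f : Edge n) : co x e f = co x f e := by
  unfold co
  have h : s(e, f) = s(f, e) := Sym2.eq_swap
  split_ifs with h1 h2 h2
  · congr 1; exact Subtype.ext h
  · exact absurd (h ▸ h1) h2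
  · exact absurd (h ▸ h2) h1
  · rfl

lemma co_spec (x : ATV n) (p : ↥(ATP n)) {e f : Edge n}
    (h : (p : Sym2 (Edge n)) = s(e, f)) : x p = co x e f := by
  have hm : s(e, f) ∈ ATP n := h ▸ p.2
  rw [co_valid x hm]
  congr 1
  exact Subtype.ext h

lemma co_add (x y : ATV n) (e f : Edge n) :
    co (x + y) e f = co x e f + co y e f := by
  unfold co; split_ifs with h
  · rfl
  · simp

lemma co_smul (c : ZMod 2) (x : ATV n) (e f : Edge n) :
    co (c • x) e f = c • co x e f := by
  unfold co; split_ifs with h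
  · rfl
  · simp

lemma co_sum {ι : Type*} (s : Finset ι) (y : ι → ATV n) (e f : Edge n) :
    co (∑ i ∈ s, y i) e f = ∑ i ∈ s, co (y i) e f := by
  unfold co; split_ifs with h
  · simp [Finset.sum_apply]
  · simp

/-- Decompose an edge containing a given vertex. -/
lemma edge_decomp {e : Edge n} {t : Fin n} (he : e.card = 2) (ht : t ∈ e) :
    ∃ a : Fin n, a ≠ t ∧ e = {t, a} := by
  rcases Finset.card_eq_two.1 he with ⟨a, b, hab, rfl⟩
  rcases Finset.mem_insert.1 ht with rfl | hb
  · exact ⟨b, fun h => hab h.symm, rfl⟩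
  · rcases Finset.mem_singleton.1 hb with rfl
    exact ⟨a, hab, by rw [Finset.pair_comm]⟩

lemma pair_right_inj {t a b : Fin n} (ha : a ≠ t) (hb : b ≠ t)
    (h : ({t, a} : Finset (Fin n)) = {t, b}) : a = b := by
  have : a ∈ ({t, b} : Finset (Fin n)) := h ▸ (by simp)
  rcases Finset.mem_insert.1 this with rfl | h2
  · exact absurd rfl ha
  · exact Finset.mem_singleton.1 h2

lemma pair_card {t a : Fin n} (h : a ≠ t) : ({t, a} : Finset (Fin n)).card = 2 := by
  rw [Finset.card_insert_of_notMem (by simp [Ne.symm h])]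
  simp


/-- `A`-relative generator. -/
noncomputable def atwA (A : Finset (Fin n)) (e : Edge n) (v : Fin n) : ATV n := fun p =>
  if ∃ f : Edge n, (p : Sym2 (Edge n)) = s(e, f) ∧ v ∈ f ∧ f ⊆ A then 1 else 0

lemma co_atwA (A : Finset (Fin n)) (e : Edge n) (v : Fin n) (e' f' : Edge n) :
    co (atwA A e v) e' f' =
      if (e'.card = 2 ∧ f'.card = 2 ∧ Disjoint e' f') ∧
          ((e' = e ∧ v ∈ f' ∧ f' ⊆ A) ∨ (f' = e ∧ v ∈ e' ∧ e' ⊆ A)) then 1 else 0 := by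
  unfold co
  split_ifs with h h2 h2
  · show atwA A e v ⟨s(e', f'), h⟩ = 1
    unfold atwA
    rw [if_pos]
    rcases h2.2 with ⟨rfl, hv, hA⟩ | ⟨rfl, hv, hA⟩
    · exact ⟨f', rfl, hv, hA⟩
    · exact ⟨e', Sym2.eq_swap, hv, hA⟩
  · show atwA A e v ⟨s(e', f'), h⟩ = 0
    unfold atwA
    rw [if_neg]
    rintro ⟨f₀, hp, hv, hA⟩
    have hval := mem_ATP_iff.1 h
    rcases Sym2.eq_iff.1 hp with ⟨rfl, rfl⟩ | ⟨rfl, rfl⟩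
    · exact h2 ⟨hval, Or.inl ⟨rfl, hv, hA⟩⟩
    · exact h2 ⟨hval, Or.inr ⟨rfl, hv, hA⟩⟩
  · exact absurd (mem_ATP_iff.2 h2.1) h
  · rfl

lemma co_zero (e f : Edge n) : co (0 : ATV n) e f = 0 := by
  unfold co; split_ifs <;> rfl

/-- Vectors supported on pairs inside `A`. -/
noncomputable def SuppIn (A : Finset (Fin n)) : Submodule (ZMod 2) (ATV n) where
  carrier := {x | ∀ e f : Edge n, ¬(e ⊆ A ∧ f ⊆ A) → co x e f = 0}
  add_mem' := by
    intro a b ha hb e f h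
    rw [co_add, ha e f h, hb e f h, add_zero]
  zero_mem' := by intro e f _; exact co_zero e f
  smul_mem' := by
    intro c x hx e f h
    rw [co_smul, hx e f h, smul_zero]

/-- Vectors supported on pairs touching `t`. -/
noncomputable def Tsupp (t : Fin n) : Submodule (ZMod 2) (ATV n) where
  carrier := {x | ∀ e f : Edge n, t ∉ e → t ∉ f → co x e f = 0}
  add_mem' := by
    intro a b ha hb e f h1 h2
    rw [co_add, ha e f h1 h2, hb e f h1 h2, add_zero]
  zero_mem' := by intro e f _ _; exact co_zero e f
  smul_mem' := by
    intro c x hx e f h1 h2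
    rw [co_smul, hx e f h1 h2, smul_zero]

/-- `A`-relative span of generators. -/
noncomputable def WA (A : Finset (Fin n)) : Submodule (ZMod 2) (ATV n) :=
  Submodule.span (ZMod 2)
    {y | ∃ (e : Edge n) (v : Fin n),
      e ⊆ A ∧ e.card = 2 ∧ v ∈ A ∧ v ∉ e ∧ y = atwA A e v}

lemma atwA_mem_WA {A : Finset (Fin n)} {e : Edge n} {v : Fin n}
    (heA : e ⊆ A) (he : e.card = 2) (hvA : v ∈ A) (hv : v ∉ e) :
    atwA A e v ∈ WA A :=
  Submodule.subset_span ⟨e, v, heA, he, hvA, hv, rfl⟩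

lemma WA_le_SuppIn (A : Finset (Fin n)) : WA A ≤ SuppIn A := by
  rw [WA, Submodule.span_le]
  rintro y ⟨e, v, heA, he, hvA, hv, rfl⟩
  intro e' f' h
  rw [co_atwA, if_neg]
  rintro ⟨hval, ⟨rfl, hv', hA⟩ | ⟨rfl, hv', hA⟩⟩
  · exact h ⟨heA, hA⟩
  · exact h ⟨hA, heA⟩

lemma x_eq_of_co {x y : ATV n} (h : ∀ e f : Edge n, s(e, f) ∈ ATP n → co x e f = co y e f) :
    x = y := by
  funext p
  obtain ⟨e, f, hp, he, hf, hd⟩ := p.2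
  rw [co_spec x p hp, co_spec y p hp]
  exact h e f (hp ▸ p.2)

lemma addself (y : ATV n) : y + y = 0 := by
  rw [← two_smul (ZMod 2) y, show (2 : ZMod 2) = 0 by decide, zero_smul]

lemma atwA_univ (e : Edge n) (v : Fin n) : atwA Finset.univ e v = atw n e v := by
  funext p
  unfold atwA atw
  refine if_congr (exists_congr fun f => ?_) rfl rfl
  simp


noncomputable def K5sum (S : Finset (Fin n)) (x : ATV n) : ZMod 2 :=
  ∑ p : ATP n, (if ∀ e ∈ (p : Sym2 (Finset (Fin n))), e ⊆ S then x p else 0)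

noncomputable def K3sum (T₁ T₂ : Finset (Fin n)) (x : ATV n) : ZMod 2 :=
  ∑ p : ATP n,
    (if ∃ e f : Finset (Fin n),
        (p : Sym2 (Finset (Fin n))) = s(e, f) ∧ e ⊆ T₁ ∧ f ⊆ T₂
      then x p else 0)

lemma hasK5_iff (x : ATV n) : HasK5 n x ↔ ∀ S : Finset (Fin n), S.card = 5 → K5sum S x = 0 :=
  Iff.rfl

lemma has2K3_iff (x : ATV n) :
    Has2K3 n x ↔ ∀ T₁ T₂ : Finset (Fin n), T₁.card = 3 → T₂.card = 3 → Disjoint T₁ T₂ →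
      K3sum T₁ T₂ x = 0 :=
  Iff.rfl

lemma K5sum_add (S : Finset (Fin n)) (x y : ATV n) :
    K5sum S (x + y) = K5sum S x + K5sum S y := by
  unfold K5sum
  rw [← Finset.sum_add_distrib]
  refine Finset.sum_congr rfl fun p _ => ?_
  split_ifs <;> simp

lemma K5sum_smul (S : Finset (Fin n)) (c : ZMod 2) (x : ATV n) :
    K5sum S (c • x) = c • K5sum S x := by
  unfold K5sum
  rw [Finset.smul_sum]
  refine Finset.sum_congr rfl fun p _ => ?_
  split_ifs <;> simp

lemma K3sum_add (T₁ T₂ : Finset (Fin n)) (x y : ATV n) :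
    K3sum T₁ T₂ (x + y) = K3sum T₁ T₂ x + K3sum T₁ T₂ y := by
  unfold K3sum
  rw [← Finset.sum_add_distrib]
  refine Finset.sum_congr rfl fun p _ => ?_
  split_ifs <;> simp

lemma K3sum_smul (T₁ T₂ : Finset (Fin n)) (c : ZMod 2) (x : ATV n) :
    K3sum T₁ T₂ (c • x) = c • K3sum T₁ T₂ x := by
  unfold K3sum
  rw [Finset.smul_sum]
  refine Finset.sum_congr rfl fun p _ => ?_
  split_ifs <;> simp

lemma K3sum_eq (x : ATV n) {T₁ T₂ : Finset (Fin n)}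
    (h1 : T₁.card = 3) (h2 : T₂.card = 3) (hd : Disjoint T₁ T₂) :
    K3sum T₁ T₂ x = ∑ e ∈ T₁.powersetCard 2, ∑ f ∈ T₂.powersetCard 2, co x e f := by
  unfold K3sum
  rw [← Finset.sum_filter, ← Finset.sum_product']
  refine (Finset.sum_bij (fun q hq => ?_) ?_ ?_ ?_ ?_).symm
  · refine (⟨s(q.1, q.2), mem_ATP_iff.2 ⟨?_, ?_, ?_⟩⟩ : ↥(ATP n))
    · exact (Finset.mem_powersetCard.1 (Finset.mem_product.1 hq).1).2
    · exact (Finset.mem_powersetCard.1 (Finset.mem_product.1 hq).2).2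
    · exact Finset.disjoint_of_subset_left
        (Finset.mem_powersetCard.1 (Finset.mem_product.1 hq).1).1
        (Finset.disjoint_of_subset_right
          (Finset.mem_powersetCard.1 (Finset.mem_product.1 hq).2).1 hd)
  · intro q hq
    refine Finset.mem_filter.2 ⟨Finset.mem_univ _, q.1, q.2, rfl, ?_, ?_⟩
    · exact (Finset.mem_powersetCard.1 (Finset.mem_product.1 hq).1).1
    · exact (Finset.mem_powersetCard.1 (Finset.mem_product.1 hq).2).1
  · intro q hq q' hq' heq
    have h := Subtype.ext_iff.1 heq
    simp only at h
    have hq1 := Finset.mem_powersetCard.1 (Finset.mem_product.1 hq).1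
    have hq2' := Finset.mem_powersetCard.1 (Finset.mem_product.1 hq').2
    rcases Sym2.eq_iff.1 h with ⟨ha, hb⟩ | ⟨ha, hb⟩
    · exact Prod.ext ha hb
    · exfalso
      obtain ⟨a, ha'⟩ := Finset.card_pos.1 (by rw [hq1.2]; norm_num : 0 < q.1.card)
      exact (Finset.disjoint_left.1 hd (hq1.1 ha')) (hq2'.1 (ha ▸ ha'))
  · rintro p hp
    obtain ⟨-, e, f, hpef, heT, hfT⟩ := Finset.mem_filter.1 hp
    have hval : s(e, f) ∈ ATP n := hpef ▸ p.2
    obtain ⟨he, hf, hdef⟩ := mem_ATP_iff.1 hval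
    refine ⟨(e, f), Finset.mem_product.2 ⟨Finset.mem_powersetCard.2 ⟨heT, he⟩,
      Finset.mem_powersetCard.2 ⟨hfT, hf⟩⟩, Subtype.ext hpef.symm⟩
  · intro q hq
    exact co_valid x _

lemma sum_pc2_card3 {β : Type*} [AddCommMonoid β] {T : Finset (Fin n)} (hT : T.card = 3)
    (F : Edge n → β) :
    ∑ f ∈ T.powersetCard 2, F f = ∑ c ∈ T, F (T.erase c) := by
  refine (Finset.sum_bij (fun c (_ : c ∈ T) => T.erase c) ?_ ?_ ?_ ?_).symm
  · intro c hc
    exact Finset.mem_powersetCard.2 ⟨Finset.erase_subset _ _,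
      by rw [Finset.card_erase_of_mem hc, hT]⟩
  · intro c hc c' hc' heq
    have heq' : T.erase c = T.erase c' := heq
    by_contra hne
    have : c' ∈ T.erase c := Finset.mem_erase.2 ⟨fun h => hne h.symm, hc'⟩
    rw [heq'] at this
    exact (Finset.notMem_erase c' T) this
  · intro f hf
    obtain ⟨hsub, hcard⟩ := Finset.mem_powersetCard.1 hf
    have h1 : (T \ f).card = 1 := by rw [Finset.card_sdiff_of_subset hsub, hT, hcard]
    obtain ⟨c, hc⟩ := Finset.card_eq_one.1 h1
    have hcT : c ∈ T ∧ c ∉ f := by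
      have : c ∈ T \ f := hc ▸ Finset.mem_singleton_self c
      exact ⟨(Finset.mem_sdiff.1 this).1, (Finset.mem_sdiff.1 this).2⟩
    refine ⟨c, hcT.1, ?_⟩
    refine (Finset.eq_of_subset_of_card_le (Finset.subset_erase.2 ⟨hsub, hcT.2⟩) ?_).symm
    rw [Finset.card_erase_of_mem hcT.1, hT, hcard]
  · intro c hc
    rfl


lemma mem_Tsupp {t : Fin n} {x : ATV n} :
    x ∈ Tsupp t ↔ ∀ e f : Edge n, t ∉ e → t ∉ f → co x e f = 0 := Iff.rfl

lemma mem_SuppIn {A : Finset (Fin n)} {x : ATV n} :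
    x ∈ SuppIn A ↔ ∀ e f : Edge n, ¬(e ⊆ A ∧ f ⊆ A) → co x e f = 0 := Iff.rfl

lemma Tsupp_apply {t : Fin n} {x : ATV n} (hx : x ∈ Tsupp t) (p : ↥(ATP n))
    (h : ¬ ∃ m ∈ (p : Sym2 (Edge n)), t ∈ m) : x p = 0 := by
  obtain ⟨e, f, hp, he, hf, hd⟩ := p.2
  rw [co_spec x p hp]
  refine mem_Tsupp.1 hx e f (fun hte => h ⟨e, ?_, hte⟩) (fun htf => h ⟨f, ?_, htf⟩)
  · rw [hp]; exact Sym2.mem_iff.2 (Or.inl rfl)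
  · rw [hp]; exact Sym2.mem_iff.2 (Or.inr rfl)

lemma K5sum_eq_t {t : Fin n} {x : ATV n} (hx : x ∈ Tsupp t) {S : Finset (Fin n)}
    (htS : t ∈ S) :
    K5sum S x =
      ∑ a ∈ S.erase t, ∑ f ∈ ((S.erase t).erase a).powersetCard 2, co x {t, a} f := by
  unfold K5sum
  rw [← Finset.sum_filter,
    ← Finset.sum_sigma (S.erase t) (fun a => ((S.erase t).erase a).powersetCard 2)
      (fun q => co x {t, q.1} q.2)]
  have hsub : Finset.univ.filter (fun p : ↥(ATP n) =>
      (∀ m ∈ (p : Sym2 (Edge n)), m ⊆ S) ∧ ∃ m ∈ (p : Sym2 (Edge n)), t ∈ m) ⊆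
      Finset.univ.filter (fun p : ↥(ATP n) => ∀ m ∈ (p : Sym2 (Edge n)), m ⊆ S) :=
    fun p hp => Finset.mem_filter.2 ⟨Finset.mem_univ _, (Finset.mem_filter.1 hp).2.1⟩
  rw [← Finset.sum_subset hsub (fun p _ hp2 => ?_)]
  swap
  · refine Tsupp_apply hx p fun htouch => hp2 ?_
    obtain ⟨-, hc⟩ := Finset.mem_filter.1 ‹p ∈ _›
    exact Finset.mem_filter.2 ⟨Finset.mem_univ _, hc, htouch⟩
  refine (Finset.sum_bij (fun q hq => (⟨s(({t, q.1} : Edge n), q.2), ?_⟩ : ↥(ATP n)))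
    ?_ ?_ ?_ ?_).symm
  · obtain ⟨ha, hf⟩ := Finset.mem_sigma.1 hq
    obtain ⟨hfsub, hfcard⟩ := Finset.mem_powersetCard.1 hf
    refine mem_ATP_iff.2 ⟨pair_card (Finset.mem_erase.1 ha).1, hfcard, ?_⟩
    refine Finset.disjoint_left.2 fun m hm hmf => ?_
    rcases Finset.mem_insert.1 hm with rfl | hm2
    · exact Finset.notMem_erase _ S (Finset.mem_of_mem_erase (hfsub hmf))
    · rcases Finset.mem_singleton.1 hm2 with rfl
      exact Finset.notMem_erase _ _ (hfsub hmf)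
  · intro q hq
    obtain ⟨ha, hf⟩ := Finset.mem_sigma.1 hq
    obtain ⟨hfsub, hfcard⟩ := Finset.mem_powersetCard.1 hf
    refine Finset.mem_filter.2 ⟨Finset.mem_univ _, fun m hm => ?_, {t, q.1},
      Sym2.mem_iff.2 (Or.inl rfl), Finset.mem_insert_self t _⟩
    rcases Sym2.mem_iff.1 hm with rfl | rfl
    · exact Finset.insert_subset htS
        (Finset.singleton_subset_iff.2 (Finset.mem_of_mem_erase ha))
    · exact fun m' hm' => Finset.mem_of_mem_erase (Finset.mem_of_mem_erase (hfsub hm'))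
  · rintro ⟨a, f⟩ hq ⟨a', f'⟩ hq' heq
    obtain ⟨ha, hf⟩ := Finset.mem_sigma.1 hq
    obtain ⟨ha', hf'⟩ := Finset.mem_sigma.1 hq'
    have h : s(({t, a} : Edge n), f) = s(({t, a'} : Edge n), f') := Subtype.ext_iff.1 heq
    rcases Sym2.eq_iff.1 h with ⟨h1, h2⟩ | ⟨h1, h2⟩
    · have : a = a' := pair_right_inj (Finset.mem_erase.1 ha).1 (Finset.mem_erase.1 ha').1 h1
      subst this; subst h2; rfl
    · exfalso
      have : t ∈ f' := h1 ▸ Finset.mem_insert_self t _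
      exact Finset.notMem_erase t S
        (Finset.mem_of_mem_erase ((Finset.mem_powersetCard.1 hf').1 this))
  · rintro p hp
    obtain ⟨-, hcond, m, hm, htm⟩ := Finset.mem_filter.1 hp
    obtain ⟨e0, f0, hp0, he0, hf0, hd0⟩ := p.2
    have he0S : e0 ⊆ S := hcond e0 (by rw [hp0]; exact Sym2.mem_iff.2 (Or.inl rfl))
    have hf0S : f0 ⊆ S := hcond f0 (by rw [hp0]; exact Sym2.mem_iff.2 (Or.inr rfl))
    rw [hp0] at hm
    rcases Sym2.mem_iff.1 hm with rfl | rfl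
    · obtain ⟨a, hat, heq⟩ := edge_decomp he0 htm
      refine ⟨⟨a, f0⟩, Finset.mem_sigma.2 ⟨Finset.mem_erase.2 ⟨hat, he0S (heq ▸
        Finset.mem_insert.2 (Or.inr (Finset.mem_singleton_self a)))⟩,
        Finset.mem_powersetCard.2 ⟨fun m' hm' => ?_, hf0⟩⟩, Subtype.ext ?_⟩
      · refine Finset.mem_erase.2 ⟨fun h => ?_, Finset.mem_erase.2 ⟨fun h => ?_, hf0S hm'⟩⟩
        · rw [h] at hm'
          have ha0 : a ∈ m := by
            rw [heq]; exact Finset.mem_insert.2 (Or.inr (Finset.mem_singleton_self a))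
          exact Finset.disjoint_left.1 hd0 ha0 hm'
        · rw [h] at hm'
          exact Finset.disjoint_left.1 hd0 htm hm'
      · show s(({t, a} : Edge n), f0) = (p : Sym2 (Edge n))
        rw [hp0, heq]
    · obtain ⟨b, hbt, heq⟩ := edge_decomp hf0 htm
      refine ⟨⟨b, e0⟩, Finset.mem_sigma.2 ⟨Finset.mem_erase.2 ⟨hbt, hf0S (heq ▸
        Finset.mem_insert.2 (Or.inr (Finset.mem_singleton_self b)))⟩,
        Finset.mem_powersetCard.2 ⟨fun m' hm' => ?_, he0⟩⟩, Subtype.ext ?_⟩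
      · refine Finset.mem_erase.2 ⟨fun h => ?_, Finset.mem_erase.2 ⟨fun h => ?_, he0S hm'⟩⟩
        · rw [h] at hm'
          have hb0 : b ∈ m := by
            rw [heq]; exact Finset.mem_insert.2 (Or.inr (Finset.mem_singleton_self b))
          exact Finset.disjoint_left.1 hd0 hm' hb0
        · rw [h] at hm'
          exact Finset.disjoint_left.1 hd0 hm' htm
      · show s(({t, b} : Edge n), e0) = (p : Sym2 (Edge n))
        rw [hp0, heq]
        exact Sym2.eq_swap
  · intro q hq
    exact co_valid x _


lemma ite_ite_and {c1 c2 : Prop} [Decidable c1] [Decidable c2] [Decidable (c1 ∧ c2)] :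
    (if c1 then (if c2 then (1 : ZMod 2) else 0) else 0) = if c1 ∧ c2 then 1 else 0 := by
  by_cases h1 : c1 <;> by_cases h2 : c2 <;> simp [h1, h2]

lemma sum_pairs_parity (e : Edge n) (v : Fin n) (he : e.card = 2) (hv : v ∉ e)
    (B : Finset (Fin n)) (hvB : v ∉ B) (hBe : ∀ u ∈ B, u ∉ e)
    (P : ↥(ATP n) → Prop)
    (hP : ∀ u ∈ B, ∀ (h : s(e, ({v, u} : Edge n)) ∈ ATP n), P ⟨s(e, ({v, u} : Edge n)), h⟩)
    (hback : ∀ p : ↥(ATP n), P p → ∃ f₀, (p : Sym2 (Edge n)) = s(e, f₀) ∧ v ∈ f₀ ∧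
      ∀ u, u ≠ v → u ∈ f₀ → u ∈ B) :
    (∑ p : ATP n, if P p then (1 : ZMod 2) else 0) = (B.card : ZMod 2) := by
  rw [Finset.sum_boole]
  refine congrArg _ ?_
  refine (Finset.card_bij (fun u (hu : u ∈ B) => (⟨s(e, ({v, u} : Edge n)), by
      refine mem_ATP_iff.2 ⟨he, pair_card (fun h => hvB (h ▸ hu)), ?_⟩
      refine Finset.disjoint_right.2 fun m hm => ?_
      rcases Finset.mem_insert.1 hm with rfl | hm2
      · exact hv
      · rcases Finset.mem_singleton.1 hm2 with rfl
        exact hBe m hu⟩ : ↥(ATP n))) ?_ ?_ ?_).symm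
  · intro u hu
    exact Finset.mem_filter.2 ⟨Finset.mem_univ _, hP u hu _⟩
  · intro u hu u' hu' heq
    have h : s(e, ({v, u} : Edge n)) = s(e, ({v, u'} : Edge n)) := Subtype.ext_iff.1 heq
    rcases Sym2.eq_iff.1 h with ⟨-, h2⟩ | ⟨h1, -⟩
    · exact pair_right_inj (fun h => hvB (by rw [← h]; exact hu))
        (fun h => hvB (by rw [← h]; exact hu')) h2
    · exact absurd (h1 ▸ Finset.mem_insert_self v _ : v ∈ e) hv
  · intro p hp
    obtain ⟨f₀, hp0, hvf, hfB⟩ := hback p (Finset.mem_filter.1 hp).2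
    have hval : s(e, f₀) ∈ ATP n := hp0 ▸ p.2
    obtain ⟨-, hf₀, hd⟩ := mem_ATP_iff.1 hval
    obtain ⟨u, huv, heq⟩ := edge_decomp hf₀ hvf
    refine ⟨u, hfB u huv (heq ▸ Finset.mem_insert.2 (Or.inr (Finset.mem_singleton_self u))), ?_⟩
    exact Subtype.ext (show s(e, ({v, u} : Edge n)) = (p : Sym2 (Edge n)) by rw [hp0, heq])

lemma atwA_K5 {A S : Finset (Fin n)} {e : Edge n} {v : Fin n} (he : e.card = 2)
    (hv : v ∉ e) (hvA : v ∈ A) (hSA : S ⊆ A) (hS : S.card = 5) :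
    K5sum S (atwA A e v) = 0 := by
  by_cases hc : e ⊆ S ∧ v ∈ S
  · have hP : ∀ u ∈ (S \ e).erase v, ∀ (h : s(e, ({v, u} : Edge n)) ∈ ATP n),
        (fun p : ↥(ATP n) => (∀ m ∈ (p : Sym2 (Edge n)), m ⊆ S) ∧
          ∃ f₀ : Edge n, (p : Sym2 (Edge n)) = s(e, f₀) ∧ v ∈ f₀ ∧ f₀ ⊆ A)
          ⟨s(e, ({v, u} : Edge n)), h⟩ := by
      intro u hu h
      have huS : u ∈ S := (Finset.mem_sdiff.1 (Finset.mem_of_mem_erase hu)).1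
      constructor
      · intro m hm
        rcases Sym2.mem_iff.1 hm with rfl | rfl
        · exact hc.1
        · exact Finset.insert_subset hc.2 (Finset.singleton_subset_iff.2 huS)
      · exact ⟨{v, u}, rfl, Finset.mem_insert_self v _,
          Finset.insert_subset hvA (Finset.singleton_subset_iff.2 (hSA huS))⟩
    have hback : ∀ p : ↥(ATP n),
        (fun p : ↥(ATP n) => (∀ m ∈ (p : Sym2 (Edge n)), m ⊆ S) ∧
          ∃ f₀ : Edge n, (p : Sym2 (Edge n)) = s(e, f₀) ∧ v ∈ f₀ ∧ f₀ ⊆ A) p →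
        ∃ f₀, (p : Sym2 (Edge n)) = s(e, f₀) ∧ v ∈ f₀ ∧
          ∀ u, u ≠ v → u ∈ f₀ → u ∈ (S \ e).erase v := by
      rintro p ⟨hcond, f₀, hp0, hvf, hfA⟩
      refine ⟨f₀, hp0, hvf, fun u huv huf => ?_⟩
      have hfS : f₀ ⊆ S := hcond f₀ (by rw [hp0]; exact Sym2.mem_iff.2 (Or.inr rfl))
      have hval : s(e, f₀) ∈ ATP n := hp0 ▸ p.2
      refine Finset.mem_erase.2 ⟨huv, Finset.mem_sdiff.2 ⟨hfS huf, ?_⟩⟩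
      exact Finset.disjoint_right.1 (mem_ATP_iff.1 hval).2.2 huf
    refine Eq.trans ?_ ((sum_pairs_parity e v he hv ((S \ e).erase v)
      (Finset.notMem_erase v _)
      (fun u hu => (Finset.mem_sdiff.1 (Finset.mem_of_mem_erase hu)).2) _ hP hback).trans ?_)
    · unfold K5sum
      refine Finset.sum_congr rfl fun p _ => ?_
      show (if _ then atwA A e v p else 0) = _
      unfold atwA
      exact @ite_ite_and _ _ _ _ (Classical.propDecidable _)
    · rw [Finset.card_erase_of_mem (Finset.mem_sdiff.2 ⟨hc.2, hv⟩),
        Finset.card_sdiff_of_subset hc.1, hS, he]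
      decide
  · refine Eq.trans ?_ (show ((0 : ℕ) : ZMod 2) = 0 by decide)
    rw [show ((0 : ℕ) : ZMod 2) = ((∅ : Finset (Fin n)).card : ZMod 2) by simp]
    have hP : ∀ u ∈ (∅ : Finset (Fin n)), ∀ (h : s(e, ({v, u} : Edge n)) ∈ ATP n),
        (fun p : ↥(ATP n) => (∀ m ∈ (p : Sym2 (Edge n)), m ⊆ S) ∧
          ∃ f₀ : Edge n, (p : Sym2 (Edge n)) = s(e, f₀) ∧ v ∈ f₀ ∧ f₀ ⊆ A)
          ⟨s(e, ({v, u} : Edge n)), h⟩ := by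
      intro u hu; exact absurd hu (Finset.notMem_empty u)
    have hback : ∀ p : ↥(ATP n),
        (fun p : ↥(ATP n) => (∀ m ∈ (p : Sym2 (Edge n)), m ⊆ S) ∧
          ∃ f₀ : Edge n, (p : Sym2 (Edge n)) = s(e, f₀) ∧ v ∈ f₀ ∧ f₀ ⊆ A) p →
        ∃ f₀, (p : Sym2 (Edge n)) = s(e, f₀) ∧ v ∈ f₀ ∧
          ∀ u, u ≠ v → u ∈ f₀ → u ∈ (∅ : Finset (Fin n)) := by
      rintro p ⟨hcond, f₀, hp0, hvf, hfA⟩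
      exfalso
      refine hc ⟨hcond e (by rw [hp0]; exact Sym2.mem_iff.2 (Or.inl rfl)), ?_⟩
      exact hcond f₀ (by rw [hp0]; exact Sym2.mem_iff.2 (Or.inr rfl)) hvf
    refine Eq.trans ?_ (sum_pairs_parity e v he hv ∅
      (Finset.notMem_empty v) (fun u hu => absurd hu (Finset.notMem_empty u)) _ hP hback)
    unfold K5sum
    refine Finset.sum_congr rfl fun p _ => ?_
    show (if _ then atwA A e v p else 0) = _
    unfold atwA
    exact @ite_ite_and _ _ _ _ (Classical.propDecidable _)


lemma atwA_K3 {A T₁ T₂ : Finset (Fin n)} {e : Edge n} {v : Fin n} (he : e.card = 2)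
    (hv : v ∉ e) (hT1A : T₁ ⊆ A) (hT2A : T₂ ⊆ A) (h1c : T₁.card = 3) (h2c : T₂.card = 3)
    (hd : Disjoint T₁ T₂) :
    K3sum T₁ T₂ (atwA A e v) = 0 := by
  have hccast : ∀ B : Finset (Fin n), B.card = 2 → (B.card : ZMod 2) = 0 := by
    intro B hB; rw [hB]; decide
  have key : ∀ B : Finset (Fin n), (hvB : v ∉ B) → (hBe : ∀ u ∈ B, u ∉ e) →
      (∀ u ∈ B, ∀ (h : s(e, ({v, u} : Edge n)) ∈ ATP n),
        (fun p : ↥(ATP n) =>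
          (∃ e' f' : Edge n, (p : Sym2 (Edge n)) = s(e', f') ∧ e' ⊆ T₁ ∧ f' ⊆ T₂) ∧
          ∃ f₀ : Edge n, (p : Sym2 (Edge n)) = s(e, f₀) ∧ v ∈ f₀ ∧ f₀ ⊆ A)
          ⟨s(e, ({v, u} : Edge n)), h⟩) →
      (∀ p : ↥(ATP n),
        (fun p : ↥(ATP n) =>
          (∃ e' f' : Edge n, (p : Sym2 (Edge n)) = s(e', f') ∧ e' ⊆ T₁ ∧ f' ⊆ T₂) ∧
          ∃ f₀ : Edge n, (p : Sym2 (Edge n)) = s(e, f₀) ∧ v ∈ f₀ ∧ f₀ ⊆ A) p →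
        ∃ f₀, (p : Sym2 (Edge n)) = s(e, f₀) ∧ v ∈ f₀ ∧
          ∀ u, u ≠ v → u ∈ f₀ → u ∈ B) →
      K3sum T₁ T₂ (atwA A e v) = (B.card : ZMod 2) := by
    intro B hvB hBe hP hback
    refine Eq.trans ?_ (sum_pairs_parity e v he hv B hvB hBe _ hP hback)
    unfold K3sum
    refine Finset.sum_congr rfl fun p _ => ?_
    show (if _ then atwA A e v p else 0) = _
    unfold atwA
    exact @ite_ite_and _ _ _ _ (Classical.propDecidable _)
  have enonempty : ∃ a, a ∈ e := by
    obtain ⟨a, b, -, rfl⟩ := Finset.card_eq_two.1 he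
    exact ⟨a, Finset.mem_insert_self a {b}⟩
  by_cases h1 : e ⊆ T₁ ∧ v ∈ T₂
  · rw [key (T₂.erase v) (Finset.notMem_erase v _)
      (fun u hu hue => Finset.disjoint_left.1 hd (h1.1 hue) (Finset.mem_of_mem_erase hu))
      ?_ ?_]
    · exact hccast _ (by rw [Finset.card_erase_of_mem h1.2, h2c])
    · intro u hu h
      constructor
      · exact ⟨e, {v, u}, rfl, h1.1, Finset.insert_subset h1.2
          (Finset.singleton_subset_iff.2 (Finset.mem_of_mem_erase hu))⟩
      · exact ⟨{v, u}, rfl, Finset.mem_insert_self v _, Finset.insert_subset (hT2A h1.2)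
          (Finset.singleton_subset_iff.2 (hT2A (Finset.mem_of_mem_erase hu)))⟩
    · rintro p ⟨⟨e', f', hp', he'1, hf'2⟩, f₀, hp0, hvf, hfA⟩
      refine ⟨f₀, hp0, hvf, fun u huv huf => ?_⟩
      rw [hp0] at hp'
      rcases Sym2.eq_iff.1 hp' with ⟨h3, h4⟩ | ⟨h3, h4⟩
      · exact Finset.mem_erase.2 ⟨huv, hf'2 (h4 ▸ huf)⟩
      · exfalso
        obtain ⟨a, ha⟩ := enonempty
        exact Finset.disjoint_left.1 hd (h1.1 ha) (hf'2 (h3 ▸ ha))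
  · by_cases h2 : e ⊆ T₂ ∧ v ∈ T₁
    · rw [key (T₁.erase v) (Finset.notMem_erase v _)
        (fun u hu hue => Finset.disjoint_left.1 hd (Finset.mem_of_mem_erase hu) (h2.1 hue))
        ?_ ?_]
      · exact hccast _ (by rw [Finset.card_erase_of_mem h2.2, h1c])
      · intro u hu h
        constructor
        · exact ⟨{v, u}, e, Sym2.eq_swap.symm, Finset.insert_subset h2.2
            (Finset.singleton_subset_iff.2 (Finset.mem_of_mem_erase hu)), h2.1⟩
        · exact ⟨{v, u}, rfl, Finset.mem_insert_self v _, Finset.insert_subset (hT1A h2.2)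
            (Finset.singleton_subset_iff.2 (hT1A (Finset.mem_of_mem_erase hu)))⟩
      · rintro p ⟨⟨e', f', hp', he'1, hf'2⟩, f₀, hp0, hvf, hfA⟩
        refine ⟨f₀, hp0, hvf, fun u huv huf => ?_⟩
        rw [hp0] at hp'
        rcases Sym2.eq_iff.1 hp' with ⟨h3, h4⟩ | ⟨h3, h4⟩
        · exfalso
          obtain ⟨a, ha⟩ := enonempty
          exact Finset.disjoint_left.1 hd (he'1 (h3 ▸ ha)) (h2.1 ha)
        · exact Finset.mem_erase.2 ⟨huv, he'1 (h4 ▸ huf)⟩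
    · rw [key ∅ (Finset.notMem_empty v) (fun u hu => absurd hu (Finset.notMem_empty u))
        (fun u hu => absurd hu (Finset.notMem_empty u)) ?_]
      · simp
      · rintro p ⟨⟨e', f', hp', he'1, hf'2⟩, f₀, hp0, hvf, hfA⟩
        exfalso
        rw [hp0] at hp'
        rcases Sym2.eq_iff.1 hp' with ⟨h3, h4⟩ | ⟨h3, h4⟩
        · exact h1 ⟨h3 ▸ he'1, hf'2 (h4 ▸ hvf)⟩
        · exact h2 ⟨h3 ▸ hf'2, he'1 (h4 ▸ hvf)⟩

/-- The `A`-restricted properties. -/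
def PropsOn (A : Finset (Fin n)) (x : ATV n) : Prop :=
  (∀ S : Finset (Fin n), S ⊆ A → S.card = 5 → K5sum S x = 0) ∧
  (∀ T₁ T₂ : Finset (Fin n), T₁ ⊆ A → T₂ ⊆ A → T₁.card = 3 → T₂.card = 3 →
    Disjoint T₁ T₂ → K3sum T₁ T₂ x = 0)

lemma PropsOn.add {A : Finset (Fin n)} {x y : ATV n} (hx : PropsOn A x) (hy : PropsOn A y) :
    PropsOn A (x + y) := by
  constructor
  · intro S hSA hS
    rw [K5sum_add, hx.1 S hSA hS, hy.1 S hSA hS, add_zero]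
  · intro T₁ T₂ h1 h2 h3 h4 h5
    rw [K3sum_add, hx.2 T₁ T₂ h1 h2 h3 h4 h5, hy.2 T₁ T₂ h1 h2 h3 h4 h5, add_zero]

lemma WA_props {A : Finset (Fin n)} {x : ATV n} (hx : x ∈ WA A) : PropsOn A x := by
  refine Submodule.span_induction ?_ ?_ ?_ ?_ hx
  · rintro y ⟨e, v, heA, he, hvA, hv, rfl⟩
    constructor
    · intro S hSA hS
      exact atwA_K5 he hv hvA hSA hS
    · intro T₁ T₂ h1 h2 h3 h4 h5
      exact atwA_K3 he hv h1 h2 h3 h4 h5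
  · constructor
    · intro S hSA hS
      unfold K5sum
      refine Finset.sum_eq_zero fun p _ => ?_
      split_ifs <;> rfl
    · intro T₁ T₂ _ _ _ _ _
      unfold K3sum
      refine Finset.sum_eq_zero fun p _ => ?_
      split_ifs <;> rfl
  · intro x y _ _ hx hy
    exact hx.add hy
  · intro c x _ hx
    constructor
    · intro S hSA hS
      rw [K5sum_smul, hx.1 S hSA hS, smul_zero]
    · intro T₁ T₂ h1 h2 h3 h4 h5
      rw [K3sum_smul, hx.2 T₁ T₂ h1 h2 h3 h4 h5, smul_zero]


lemma zmod2_cancel : ∀ x y : ZMod 2, x + y = 0 → x = y := by decide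

lemma zmod2_ite_eq_one : ∀ w : ZMod 2, (if w = 1 then (1 : ZMod 2) else 0) = w := by decide

/-- Triangle sum of `r` in slot `a` over triangle `T`. -/
noncomputable def ssig (r : ATV n) (t a : Fin n) (T : Finset (Fin n)) : ZMod 2 :=
  ∑ f ∈ T.powersetCard 2, co r {t, a} f

/-- The common value `σ(T)` (choosing the smallest admissible slot). -/
noncomputable def sigT (r : ATV n) (t : Fin n) (A T : Finset (Fin n)) : ZMod 2 :=
  if h : ((A.erase t) \ T).Nonempty then ssig r t (((A.erase t) \ T).min' h) T else 0

lemma ssig_wd {r : ATV n} {t : Fin n} {A : Finset (Fin n)} (htA : t ∈ A)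
    (hr : r ∈ Tsupp t) (hprops : PropsOn A r) {T : Finset (Fin n)} {a a' : Fin n}
    (hTM : T ⊆ A.erase t) (hTc : T.card = 3) (ha : a ∈ A.erase t) (ha' : a' ∈ A.erase t)
    (haT : a ∉ T) (ha'T : a' ∉ T) : ssig r t a T = ssig r t a' T := by
  rcases eq_or_ne a a' with rfl | hne
  · rfl
  have hat : a ≠ t := (Finset.mem_erase.1 ha).1
  have ha't : a' ≠ t := (Finset.mem_erase.1 ha').1
  have haA : a ∈ A := Finset.mem_of_mem_erase ha
  have ha'A : a' ∈ A := Finset.mem_of_mem_erase ha'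
  have hT1A : ({t, a, a'} : Finset (Fin n)) ⊆ A := by
    intro m hm
    rcases Finset.mem_insert.1 hm with rfl | hm2
    · exact htA
    rcases Finset.mem_insert.1 hm2 with rfl | hm3
    · exact haA
    · rcases Finset.mem_singleton.1 hm3 with rfl
      exact ha'A
  have hT1c : ({t, a, a'} : Finset (Fin n)).card = 3 := by
    rw [Finset.card_insert_of_notMem, Finset.card_insert_of_notMem, Finset.card_singleton]
    · simp [hne]
    · intro hmem
      rcases Finset.mem_insert.1 hmem with h | h
      · exact hat h.symm
      · exact ha't (Finset.mem_singleton.1 h).symm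
  have hdisj : Disjoint ({t, a, a'} : Finset (Fin n)) T := by
    refine Finset.disjoint_left.2 fun m hm hmT => ?_
    rcases Finset.mem_insert.1 hm with rfl | hm2
    · exact Finset.notMem_erase m A (hTM hmT)
    rcases Finset.mem_insert.1 hm2 with rfl | hm3
    · exact haT hmT
    · rcases Finset.mem_singleton.1 hm3 with rfl
      exact ha'T hmT
  have hTA : T ⊆ A := fun m hm => Finset.mem_of_mem_erase (hTM hm)
  have h0 := hprops.2 {t, a, a'} T hT1A hTA hT1c hTc hdisj
  rw [K3sum_eq r hT1c hTc hdisj, sum_pc2_card3 hT1c] at h0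
  rw [Finset.sum_insert (by
    intro hmem
    rcases Finset.mem_insert.1 hmem with h | h
    · exact hat h.symm
    · exact ha't (Finset.mem_singleton.1 h).symm), Finset.sum_insert (by
      simp [hne]), Finset.sum_singleton] at h0
  have e1 : ({t, a, a'} : Finset (Fin n)).erase t = {a, a'} := by
    rw [Finset.erase_insert]
    intro hmem
    rcases Finset.mem_insert.1 hmem with h | h
    · exact hat h.symm
    · exact ha't (Finset.mem_singleton.1 h).symm
  have e2 : ({t, a, a'} : Finset (Fin n)).erase a = {t, a'} := by
    ext m
    simp only [Finset.mem_erase, Finset.mem_insert, Finset.mem_singleton]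
    constructor
    · rintro ⟨h1, (rfl | rfl | rfl)⟩
      · exact Or.inl rfl
      · exact absurd rfl h1
      · exact Or.inr rfl
    · rintro (rfl | rfl)
      exacts [⟨Ne.symm hat, Or.inl rfl⟩, ⟨Ne.symm hne, Or.inr (Or.inr rfl)⟩]
  have e3 : ({t, a, a'} : Finset (Fin n)).erase a' = {t, a} := by
    ext m
    simp only [Finset.mem_erase, Finset.mem_insert, Finset.mem_singleton]
    constructor
    · rintro ⟨h1, (rfl | rfl | rfl)⟩
      · exact Or.inl rfl
      · exact Or.inr rfl
      · exact absurd rfl h1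
    · rintro (rfl | rfl)
      exacts [⟨Ne.symm ha't, Or.inl rfl⟩, ⟨hne, Or.inr (Or.inl rfl)⟩]
  rw [e1, e2, e3] at h0
  have hz : ∑ f ∈ T.powersetCard 2, co r ({a, a'} : Finset (Fin n)) f = 0 := by
    refine Finset.sum_eq_zero fun f hf => ?_
    refine mem_Tsupp.1 hr _ _ ?_ ?_
    · intro hmem
      rcases Finset.mem_insert.1 hmem with h | h
      · exact hat h.symm
      · exact ha't (Finset.mem_singleton.1 h).symm
    · intro htf
      exact Finset.notMem_erase t A (hTM ((Finset.mem_powersetCard.1 hf).1 htf))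
  rw [hz, zero_add] at h0
  exact (zmod2_cancel _ _ h0).symm

lemma sigT_wd {r : ATV n} {t : Fin n} {A : Finset (Fin n)} (htA : t ∈ A)
    (hr : r ∈ Tsupp t) (hprops : PropsOn A r) {T : Finset (Fin n)} {a : Fin n}
    (hTM : T ⊆ A.erase t) (hTc : T.card = 3) (ha : a ∈ A.erase t) (haT : a ∉ T) :
    ssig r t a T = sigT r t A T := by
  have hne : ((A.erase t) \ T).Nonempty := ⟨a, Finset.mem_sdiff.2 ⟨ha, haT⟩⟩
  rw [sigT, dif_pos hne]
  have hmin := ((A.erase t) \ T).min'_mem hne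
  exact ssig_wd htA hr hprops hTM hTc ha (Finset.mem_sdiff.1 hmin).1 haT
    (Finset.mem_sdiff.1 hmin).2

lemma tetra {r : ATV n} {t : Fin n} {A : Finset (Fin n)} (htA : t ∈ A)
    (hr : r ∈ Tsupp t) (hprops : PropsOn A r) {Q : Finset (Fin n)}
    (hQM : Q ⊆ A.erase t) (hQc : Q.card = 4) :
    ∑ a ∈ Q, sigT r t A (Q.erase a) = 0 := by
  have htQ : t ∉ Q := fun h => Finset.notMem_erase t A (hQM h)
  have hSA : insert t Q ⊆ A := Finset.insert_subset htA
    (fun m hm => Finset.mem_of_mem_erase (hQM hm))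
  have hSc : (insert t Q).card = 5 := by
    rw [Finset.card_insert_of_notMem htQ, hQc]
  have h0 := hprops.1 (insert t Q) hSA hSc
  rw [K5sum_eq_t hr (Finset.mem_insert_self t Q), Finset.erase_insert htQ] at h0
  rw [← h0]
  refine (Finset.sum_congr rfl fun a ha => ?_).symm
  have haM : a ∈ A.erase t := hQM ha
  refine (sigT_wd htA hr hprops ?_ ?_ haM (Finset.notMem_erase a Q) : ssig r t a _ = _)
  · exact fun m hm => hQM (Finset.mem_of_mem_erase hm)
  · rw [Finset.card_erase_of_mem ha, hQc]


noncomputable def Yf (r : ATV n) (t : Fin n) (A : Finset (Fin n)) (b : Fin n)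
    (f : Finset (Fin n)) : ZMod 2 :=
  if b ∈ f then 0 else sigT r t A (insert b f)

lemma Ysum {r : ATV n} {t : Fin n} {A : Finset (Fin n)} (htA : t ∈ A)
    (hr : r ∈ Tsupp t) (hprops : PropsOn A r) {b : Fin n} (hb : b ∈ A.erase t)
    {T : Finset (Fin n)} (hT : T ⊆ A.erase t) (hTc : T.card = 3) :
    ∑ f ∈ T.powersetCard 2, Yf r t A b f = sigT r t A T := by
  rw [sum_pc2_card3 hTc]
  by_cases hbT : b ∈ T
  · rw [← Finset.add_sum_erase _ _ hbT]
    have h1 : Yf r t A b (T.erase b) = sigT r t A T := by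
      rw [Yf, if_neg (Finset.notMem_erase b T), Finset.insert_erase hbT]
    have h2 : ∀ c ∈ T.erase b, Yf r t A b (T.erase c) = 0 := fun c hc => by
      rw [Yf, if_pos (Finset.mem_erase.2 ⟨Ne.symm (Finset.mem_erase.1 hc).1, hbT⟩)]
    rw [h1, Finset.sum_eq_zero h2, add_zero]
  · have hQ : insert b T ⊆ A.erase t := Finset.insert_subset hb hT
    have hQc : (insert b T).card = 4 := by
      rw [Finset.card_insert_of_notMem hbT, hTc]
    have h0 := tetra htA hr hprops hQ hQc
    rw [Finset.sum_insert hbT, Finset.erase_insert hbT] at h0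
    have hterm : ∀ c ∈ T, Yf r t A b (T.erase c) = sigT r t A ((insert b T).erase c) :=
      fun c hc => by
        rw [Yf, if_neg (fun h => hbT (Finset.mem_of_mem_erase h)),
          Finset.erase_insert_of_ne (fun h : b = c => hbT (h ▸ hc))]
    rw [Finset.sum_congr rfl hterm]
    exact (zmod2_cancel _ _ h0).symm

lemma erase_triple₁ {x y z : Fin n} (hxy : x ≠ y) (hxz : x ≠ z) :
    ({x, y, z} : Finset (Fin n)).erase x = {y, z} := by
  ext m
  simp only [Finset.mem_erase, Finset.mem_insert, Finset.mem_singleton]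
  constructor
  · rintro ⟨h1, (rfl | rfl | rfl)⟩
    · exact absurd rfl h1
    · exact Or.inl rfl
    · exact Or.inr rfl
  · rintro (rfl | rfl)
    exacts [⟨Ne.symm hxy, Or.inr (Or.inl rfl)⟩, ⟨Ne.symm hxz, Or.inr (Or.inr rfl)⟩]

lemma erase_triple₂ {x y z : Fin n} (hxy : x ≠ y) (hyz : y ≠ z) :
    ({x, y, z} : Finset (Fin n)).erase y = {x, z} := by
  ext m
  simp only [Finset.mem_erase, Finset.mem_insert, Finset.mem_singleton]
  constructor
  · rintro ⟨h1, (rfl | rfl | rfl)⟩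
    · exact Or.inl rfl
    · exact absurd rfl h1
    · exact Or.inr rfl
  · rintro (rfl | rfl)
    exacts [⟨hxy, Or.inl rfl⟩, ⟨Ne.symm hyz, Or.inr (Or.inr rfl)⟩]

lemma erase_triple₃ {x y z : Fin n} (hxz : x ≠ z) (hyz : y ≠ z) :
    ({x, y, z} : Finset (Fin n)).erase z = {x, y} := by
  ext m
  simp only [Finset.mem_erase, Finset.mem_insert, Finset.mem_singleton]
  constructor
  · rintro ⟨h1, (rfl | rfl | rfl)⟩
    · exact Or.inl rfl
    · exact Or.inr rfl
    · exact absurd rfl h1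
  · rintro (rfl | rfl)
    exacts [⟨hxz, Or.inl rfl⟩, ⟨hyz, Or.inr (Or.inl rfl)⟩]

noncomputable def Uset (z : ATV n) (t : Fin n) (M : Finset (Fin n)) (a : Fin n) :
    Finset (Fin n) :=
  if h : (M.erase a).Nonempty then
    ((M.erase a).erase ((M.erase a).min' h)).filter
      (fun v => co z {t, a} {(M.erase a).min' h, v} = 1)
  else ∅

lemma Uset_eval {z : ATV n} {t : Fin n} {M : Finset (Fin n)}
    (htri : ∀ a ∈ M, ∀ T ⊆ M.erase a, T.card = 3 →
      ∑ f ∈ T.powersetCard 2, co z {t, a} f = 0)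
    {a : Fin n} (ha : a ∈ M) {f : Finset (Fin n)} (hf : f ⊆ M.erase a) (hfc : f.card = 2)
    (hMc : 3 ≤ M.card) :
    co z {t, a} f = ∑ v ∈ f, (if v ∈ Uset z t M a then (1 : ZMod 2) else 0) := by
  have hms : (M.erase a).Nonempty := by
    rw [← Finset.card_pos, Finset.card_erase_of_mem ha]
    omega
  have hUdef : Uset z t M a = ((M.erase a).erase ((M.erase a).min' hms)).filter
      (fun v => co z {t, a} {(M.erase a).min' hms, v} = 1) := dif_pos hms
  set ba := (M.erase a).min' hms with hba_def
  have hbaM : ba ∈ M.erase a := (M.erase a).min'_mem hms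
  have hvU : ∀ v, v ∈ M.erase a → v ≠ ba →
      (if v ∈ Uset z t M a then (1 : ZMod 2) else 0) = co z {t, a} {ba, v} := by
    intro v hv hvba
    rw [hUdef]
    by_cases hco : co z {t, a} {ba, v} = 1
    · have hmem : v ∈ ((M.erase a).erase ba).filter
          (fun v => co z {t, a} {ba, v} = 1) :=
        Finset.mem_filter.2 ⟨Finset.mem_erase.2 ⟨hvba, hv⟩, hco⟩
      rw [if_pos hmem, hco]
    · have hmem : v ∉ ((M.erase a).erase ba).filter
          (fun v => co z {t, a} {ba, v} = 1) :=
        fun hmem => hco (Finset.mem_filter.1 hmem).2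
      rw [if_neg hmem]
      rcases (by decide : ∀ w : ZMod 2, w = 0 ∨ w = 1) (co z {t, a} {ba, v}) with h | h
      · rw [h]
      · exact absurd h hco
  have hbaU : (if ba ∈ Uset z t M a then (1 : ZMod 2) else 0) = 0 := by
    rw [hUdef, if_neg (fun hmem => Finset.notMem_erase ba _ (Finset.mem_filter.1 hmem).1)]
  obtain ⟨c, d, hcd, rfl⟩ := Finset.card_eq_two.1 hfc
  have hcM : c ∈ M.erase a := hf (Finset.mem_insert_self c {d})
  have hdM : d ∈ M.erase a := hf (Finset.mem_insert.2 (Or.inr (Finset.mem_singleton_self d)))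
  by_cases hbaf : ba ∈ ({c, d} : Finset (Fin n))
  · rcases Finset.mem_insert.1 hbaf with rfl | hbad
    · rw [Finset.sum_insert (by simp [hcd]), Finset.sum_singleton, hbaU, zero_add,
        hvU d hdM (fun h => hcd h.symm)]
    · rcases Finset.mem_singleton.1 hbad with rfl
      rw [Finset.sum_insert (by simp [hcd]), Finset.sum_singleton, hbaU, add_zero,
        hvU c hcM (fun h => hcd h), Finset.pair_comm c ba]
  · have hbac : ba ≠ c := fun h => hbaf (by
      rw [h]; exact Finset.mem_insert_self c {d})
    have hbad : ba ≠ d := fun h => hbaf (by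
      rw [h]; exact Finset.mem_insert.2 (Or.inr (Finset.mem_singleton_self d)))
    have hT : ({ba, c, d} : Finset (Fin n)) ⊆ M.erase a := by
      intro m hm
      rcases Finset.mem_insert.1 hm with rfl | hm2
      · exact hbaM
      · exact hf hm2
    have hTc : ({ba, c, d} : Finset (Fin n)).card = 3 := by
      rw [Finset.card_insert_of_notMem hbaf, hfc]
    have h0 := htri a ha _ hT hTc
    rw [sum_pc2_card3 hTc, Finset.sum_insert hbaf,
      Finset.sum_insert (by simp [hcd]), Finset.sum_singleton,
      erase_triple₁ hbac hbad, erase_triple₂ hbac hcd, erase_triple₃ hbad hcd] at h0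
    rw [Finset.sum_insert (by simp [hcd]), Finset.sum_singleton,
      hvU c hcM (Ne.symm hbac), hvU d hdM (Ne.symm hbad)]
    have := zmod2_cancel _ _ h0
    rw [this, add_comm]


lemma Uset_subset (z : ATV n) (t : Fin n) (M : Finset (Fin n)) (a : Fin n) :
    Uset z t M a ⊆ M.erase a := by
  unfold Uset
  split_ifs with h
  · exact (Finset.filter_subset _ _).trans (Finset.erase_subset _ _)
  · exact Finset.empty_subset _

lemma tstep {A : Finset (Fin n)} {t : Fin n} (htA : t ∈ A) {r : ATV n}
    (hrS : r ∈ SuppIn A) (hrT : r ∈ Tsupp t) (hprops : PropsOn A r) : r ∈ WA A := by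
  by_cases hA4 : A.card < 4
  · have hr0 : r = 0 := by
      refine x_eq_of_co fun e f hval => ?_
      rw [co_zero]
      refine mem_SuppIn.1 hrS e f fun hin => ?_
      obtain ⟨he, hf, hd⟩ := mem_ATP_iff.1 hval
      have hu : (e ∪ f).card = 4 := by
        rw [Finset.card_union_of_disjoint hd, he, hf]
      have h4 : 4 ≤ A.card := by
        rw [← hu]
        exact Finset.card_le_card (Finset.union_subset hin.1 hin.2)
      omega
    rw [hr0]
    exact zero_mem _
  push_neg at hA4
  have hMc : 3 ≤ (A.erase t).card := by
    rw [Finset.card_erase_of_mem htA]; omega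
  have hMne : (A.erase t).Nonempty := Finset.card_pos.1 (by omega)
  obtain ⟨b, hbM⟩ := hMne
  have htM : t ∉ A.erase t := Finset.notMem_erase t A
  have hMA : A.erase t ⊆ A := Finset.erase_subset t A
  set yc : ATV n := ∑ f ∈ (A.erase t).powersetCard 2, Yf r t A b f • atwA A f t with hyc_def
  have hycW : yc ∈ WA A := by
    refine Submodule.sum_smul_mem _ _ fun f hf => ?_
    obtain ⟨hfM, hfc⟩ := Finset.mem_powersetCard.1 hf
    exact atwA_mem_WA (hfM.trans hMA) hfc htA (fun h => htM (hfM h))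
  set z : ATV n := r + yc with hz_def
  have hzT : z ∈ Tsupp t := by
    refine Submodule.add_mem _ hrT ?_
    refine Submodule.sum_mem _ fun f hf => Submodule.smul_mem _ _ ?_
    refine mem_Tsupp.2 fun e' f' hte htf => ?_
    rw [co_atwA, if_neg]
    rintro ⟨hval, ⟨-, htf', -⟩ | ⟨-, hte', -⟩⟩
    · exact htf htf'
    · exact hte hte'
  have hE2 : ∀ a ∈ A.erase t, ∀ f : Edge n, f ⊆ (A.erase t).erase a → f.card = 2 →
      co z {t, a} f = co r {t, a} f + Yf r t A b f := by
    intro a haM f hfsub hfc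
    have hat : a ≠ t := (Finset.mem_erase.1 haM).1
    have htf : t ∉ f := fun h => htM (Finset.mem_of_mem_erase (hfsub h))
    have haf : a ∉ f := fun h => Finset.notMem_erase a _ (hfsub h)
    have hfM : f ⊆ A.erase t := fun m hm => Finset.mem_of_mem_erase (hfsub hm)
    rw [hz_def, co_add, co_sum]
    congr 1
    have hterm : ∀ f' ∈ (A.erase t).powersetCard 2,
        co (Yf r t A b f' • atwA A f' t) {t, a} f
          = if f' = f then Yf r t A b f else 0 := by
      intro f' hf'
      obtain ⟨hf'M, hf'c⟩ := Finset.mem_powersetCard.1 hf'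
      rw [co_smul, co_atwA]
      by_cases hff : f' = f
      · subst hff
        rw [if_pos, if_pos rfl]
        · simp
        · refine ⟨⟨pair_card hat, hfc, ?_⟩, Or.inr ⟨rfl, Finset.mem_insert_self t {a}, ?_⟩⟩
          · refine Finset.disjoint_left.2 fun m hm hmf => ?_
            rcases Finset.mem_insert.1 hm with rfl | hm2
            · exact htf hmf
            · rcases Finset.mem_singleton.1 hm2 with rfl
              exact haf hmf
          · exact Finset.insert_subset htA
              (Finset.singleton_subset_iff.2 (hMA haM))
      · rw [if_neg, if_neg hff, smul_zero]
        rintro ⟨hval, ⟨-, htf2, -⟩ | ⟨heq, -, -⟩⟩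
        · exact htf htf2
        · exact hff heq.symm
    rw [Finset.sum_congr rfl hterm, Finset.sum_ite_eq' _ f _,
      if_pos (Finset.mem_powersetCard.2 ⟨hfM, hfc⟩)]
  have hE3 : ∀ a ∈ A.erase t, ∀ T ⊆ (A.erase t).erase a, T.card = 3 →
      ∑ f ∈ T.powersetCard 2, co z {t, a} f = 0 := by
    intro a haM T hTsub hTc
    have hTM : T ⊆ A.erase t := fun m hm => Finset.mem_of_mem_erase (hTsub hm)
    have haT : a ∉ T := fun h => Finset.notMem_erase a _ (hTsub h)
    have h1 : ∑ f ∈ T.powersetCard 2, co z {t, a} f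
        = ssig r t a T + ∑ f ∈ T.powersetCard 2, Yf r t A b f := by
      rw [ssig, ← Finset.sum_add_distrib]
      refine Finset.sum_congr rfl fun f hf => ?_
      obtain ⟨hfT, hfc⟩ := Finset.mem_powersetCard.1 hf
      exact hE2 a haM f (fun m hm => hTsub (hfT hm)) hfc
    rw [h1, Ysum htA hrT hprops hbM hTM hTc,
      sigT_wd htA hrT hprops hTM hTc haM haT]
    exact (by decide : ∀ w : ZMod 2, w + w = 0) _
  set Z : ATV n := ∑ a ∈ A.erase t, ∑ v ∈ Uset z t (A.erase t) a, atwA A {t, a} v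
    with hZ_def
  have hZW : Z ∈ WA A := by
    refine Submodule.sum_mem _ fun a haM => Submodule.sum_mem _ fun v hv => ?_
    have hvMa := Uset_subset z t (A.erase t) a hv
    have hvM : v ∈ A.erase t := Finset.mem_of_mem_erase hvMa
    refine atwA_mem_WA ?_ (pair_card (Finset.mem_erase.1 haM).1) (hMA hvM) ?_
    · exact Finset.insert_subset htA
        (Finset.singleton_subset_iff.2 (hMA haM))
    · intro hmem
      rcases Finset.mem_insert.1 hmem with rfl | h2
      · exact htM hvM
      · rcases Finset.mem_singleton.1 h2 with rfl
        exact Finset.notMem_erase v _ hvMa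
  have hcase : ∀ (a0 : Fin n) (f : Edge n), a0 ≠ t →
      (hval : s(({t, a0} : Edge n), f) ∈ ATP n) → co z {t, a0} f = co Z {t, a0} f := by
    intro a0 f ha0t hval
    obtain ⟨he, hf, hd⟩ := mem_ATP_iff.1 hval
    have htf : t ∉ f := Finset.disjoint_left.1 hd (Finset.mem_insert_self t {a0})
    have ha0f : a0 ∉ f := Finset.disjoint_left.1 hd
      (Finset.mem_insert.2 (Or.inr (Finset.mem_singleton_self a0)))
    by_cases hin : ({t, a0} : Edge n) ⊆ A ∧ f ⊆ A
    · have ha0M : a0 ∈ A.erase t := Finset.mem_erase.2 ⟨ha0t,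
        hin.1 (Finset.mem_insert.2 (Or.inr (Finset.mem_singleton_self a0)))⟩
      have hfsub : f ⊆ (A.erase t).erase a0 := fun m hm =>
        Finset.mem_erase.2 ⟨fun h => ha0f (h ▸ hm), Finset.mem_erase.2
          ⟨fun h => htf (h ▸ hm), hin.2 hm⟩⟩
      have hL := Uset_eval hE3 ha0M hfsub hf hMc
      have hR : co Z {t, a0} f
          = ∑ v ∈ Uset z t (A.erase t) a0, (if v ∈ f then (1 : ZMod 2) else 0) := by
        rw [hZ_def, co_sum]
        have houter : ∀ a ∈ A.erase t,
            co (∑ v ∈ Uset z t (A.erase t) a, atwA A {t, a} v) {t, a0} f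
              = if a = a0 then
                  ∑ v ∈ Uset z t (A.erase t) a, (if v ∈ f then (1 : ZMod 2) else 0)
                else 0 := by
          intro a haM
          have hat : a ≠ t := (Finset.mem_erase.1 haM).1
          rw [co_sum]
          by_cases haa : a = a0
          · subst haa
            rw [if_pos rfl]
            refine Finset.sum_congr rfl fun v hv => ?_
            rw [co_atwA]
            by_cases hvf : v ∈ f
            · rw [if_pos ⟨⟨he, hf, hd⟩, Or.inl ⟨rfl, hvf, hin.2⟩⟩, if_pos hvf]
            · rw [if_neg, if_neg hvf]
              rintro ⟨-, ⟨-, hvf2, -⟩ | ⟨heqf, -, -⟩⟩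
              · exact hvf hvf2
              · exact htf (heqf ▸ Finset.mem_insert_self t {a})
          · rw [if_neg haa, Finset.sum_eq_zero]
            intro v hv
            rw [co_atwA, if_neg]
            rintro ⟨-, ⟨heqp, -, -⟩ | ⟨heqf, -, -⟩⟩
            · exact haa (pair_right_inj ha0t hat heqp).symm
            · exact htf (heqf ▸ Finset.mem_insert_self t {a})
        rw [Finset.sum_congr rfl houter, Finset.sum_ite_eq' _ a0 _, if_pos ha0M]
      rw [hL, hR, Finset.sum_boole, Finset.sum_boole]
      have h1 : Finset.filter (fun v => v ∈ Uset z t (A.erase t) a0) f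
          = f ∩ Uset z t (A.erase t) a0 := Finset.filter_mem_eq_inter
      have h2 : Finset.filter (fun v => v ∈ f) (Uset z t (A.erase t) a0)
          = Uset z t (A.erase t) a0 ∩ f := Finset.filter_mem_eq_inter
      rw [h1, h2, Finset.inter_comm]
    · have hzero1 : co z {t, a0} f = 0 := by
        rw [hz_def, co_add, mem_SuppIn.1 hrS _ _ hin, zero_add, co_sum]
        refine Finset.sum_eq_zero fun f' hf' => ?_
        obtain ⟨hf'M, hf'c⟩ := Finset.mem_powersetCard.1 hf'
        rw [co_smul, co_atwA, if_neg, smul_zero]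
        rintro ⟨-, ⟨-, htf2, -⟩ | ⟨heqf, -, heA⟩⟩
        · exact htf htf2
        · exact hin ⟨heA, by rw [heqf]; exact hf'M.trans hMA⟩
      have hzero2 : co Z {t, a0} f = 0 := by
        rw [hZ_def, co_sum]
        refine Finset.sum_eq_zero fun a haM => ?_
        rw [co_sum]
        refine Finset.sum_eq_zero fun v hv => ?_
        rw [co_atwA, if_neg]
        rintro ⟨-, ⟨heqp, -, hfA⟩ | ⟨heqf, -, -⟩⟩
        · refine hin ⟨?_, hfA⟩
          rw [heqp]
          exact Finset.insert_subset htA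
            (Finset.singleton_subset_iff.2 (hMA haM))
        · exact htf (heqf ▸ Finset.mem_insert_self t {a})
      rw [hzero1, hzero2]
  have hfinal : z = Z := by
    refine x_eq_of_co fun e f hval => ?_
    by_cases hte : t ∈ e
    · obtain ⟨he, hf, hd⟩ := mem_ATP_iff.1 hval
      obtain ⟨a0, ha0t, rfl⟩ := edge_decomp he hte
      exact hcase a0 f ha0t hval
    by_cases htf : t ∈ f
    · have hval' : s(f, e) ∈ ATP n := by
        rwa [show s(f, e) = s(e, f) from Sym2.eq_swap]
      obtain ⟨hf2, he2, hd2⟩ := mem_ATP_iff.1 hval'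
      obtain ⟨a0, ha0t, rfl⟩ := edge_decomp hf2 htf
      rw [co_symm z, co_symm Z]
      exact hcase a0 e ha0t hval'
    · rw [mem_Tsupp.1 hzT e f hte htf, hZ_def, co_sum]
      refine (Finset.sum_eq_zero fun a haM => ?_).symm
      rw [co_sum]
      refine Finset.sum_eq_zero fun v hv => ?_
      rw [co_atwA, if_neg]
      rintro ⟨-, ⟨heqp, -, -⟩ | ⟨heqf, -, -⟩⟩
      · exact hte (heqp ▸ Finset.mem_insert_self t {a})
      · exact htf (heqf ▸ Finset.mem_insert_self t {a})
  have hrfin : r = Z + yc := by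
    have h1 : r = z + yc := by
      rw [hz_def, add_assoc, addself yc, add_zero]
    rw [h1, hfinal]
  rw [hrfin]
  exact Submodule.add_mem _ hZW hycW


lemma co_invalid (x : ATV n) {e f : Edge n} (h : s(e, f) ∉ ATP n) : co x e f = 0 :=
  dif_neg h

lemma SuppIn_mono {A B : Finset (Fin n)} (hAB : A ⊆ B) : SuppIn A ≤ SuppIn B :=
  fun x hx e f hnot => hx e f (fun hm => hnot ⟨hm.1.trans hAB, hm.2.trans hAB⟩)

lemma PropsOn_mono {A B : Finset (Fin n)} (hAB : A ⊆ B) {x : ATV n} (hx : PropsOn B x) :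
    PropsOn A x :=
  ⟨fun S hS h5 => hx.1 S (hS.trans hAB) h5,
   fun T₁ T₂ h1 h2 h3 h4 h5 => hx.2 T₁ T₂ (h1.trans hAB) (h2.trans hAB) h3 h4 h5⟩

lemma zmod2_addself : ∀ w : ZMod 2, w + w = 0 := by decide

lemma main_lemma : ∀ (A : Finset (Fin n)) (x : ATV n), x ∈ SuppIn A → PropsOn A x →
    x ∈ WA A := by
  intro A
  induction A using Finset.strongInductionOn with
  | _ A ih =>
  intro x hxS hxP
  rcases Finset.eq_empty_or_nonempty A with rfl | ⟨t, htA⟩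
  · have hx0 : x = 0 := by
      refine x_eq_of_co fun e f hval => ?_
      rw [co_zero]
      refine mem_SuppIn.1 hxS e f fun hin => ?_
      obtain ⟨he, -, -⟩ := mem_ATP_iff.1 hval
      rw [Finset.subset_empty.1 hin.1] at he
      simp at he
    rw [hx0]
    exact zero_mem _
  have hMA : A.erase t ⊆ A := Finset.erase_subset t A
  set K : Finset ((_ : Edge n) × Fin n) :=
    ((A.erase t).powersetCard 2).sigma (fun e => (A.erase t) \ e) with hK_def
  set g : ATV n := ∑ q ∈ K, (co x q.1 ({t, q.2} : Edge n)) • atwA A q.1 q.2 with hg_def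
  have hgW : g ∈ WA A := by
    refine Submodule.sum_smul_mem _ _ fun q hq => ?_
    obtain ⟨hq1, hq2⟩ := Finset.mem_sigma.1 hq
    obtain ⟨hq1M, hq1c⟩ := Finset.mem_powersetCard.1 hq1
    obtain ⟨hq2M, hq2e⟩ := Finset.mem_sdiff.1 hq2
    exact atwA_mem_WA (hq1M.trans hMA) hq1c (hMA hq2M) hq2e
  -- coordinates of g at t-pairs
  have hkill : ∀ (e' : Edge n) (a' : Fin n), s(e', ({t, a'} : Edge n)) ∈ ATP n →
      co (x + g) e' {t, a'} = 0 := by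
    intro e' a' hval
    obtain ⟨he', hf', hd'⟩ := mem_ATP_iff.1 hval
    have ha't : a' ≠ t := by
      intro h
      rw [h] at hf'
      simp at hf'
    have hte' : t ∉ e' := Finset.disjoint_right.1 hd' (Finset.mem_insert_self t {a'})
    have ha'e' : a' ∉ e' := Finset.disjoint_right.1 hd'
      (Finset.mem_insert.2 (Or.inr (Finset.mem_singleton_self a')))
    have hterm : ∀ q ∈ K, q ≠ ⟨e', a'⟩ →
        (co x q.1 ({t, q.2} : Edge n)) • co (atwA A q.1 q.2) e' {t, a'} = 0 := by
      rintro ⟨e₀, a₀⟩ hq hne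
      obtain ⟨hq1, hq2⟩ := Finset.mem_sigma.1 hq
      obtain ⟨hq1M, hq1c⟩ := Finset.mem_powersetCard.1 hq1
      obtain ⟨hq2M, hq2e⟩ := Finset.mem_sdiff.1 hq2
      rw [co_atwA, if_neg, smul_zero]
      rintro ⟨-, ⟨heq, hmem, -⟩ | ⟨heq, -, -⟩⟩
      · rcases Finset.mem_insert.1 hmem with h | h
        · exact (Finset.mem_erase.1 hq2M).1 h
        · rcases Finset.mem_singleton.1 h with rfl
          exact hne (by rw [heq])
      · exact Finset.notMem_erase t A (hq1M (by rw [← heq]; exact Finset.mem_insert_self t {a'}))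
    by_cases hK : (⟨e', a'⟩ : (_ : Edge n) × Fin n) ∈ K
    · have hgco : co g e' {t, a'} = co x e' {t, a'} := by
        rw [hg_def, co_sum,
          Finset.sum_congr rfl (fun q (_ : q ∈ K) =>
            co_smul (co x q.1 ({t, q.2} : Edge n)) (atwA A q.1 q.2) e' {t, a'}),
          Finset.sum_eq_single (⟨e', a'⟩ : (_ : Edge n) × Fin n) hterm
            (fun h => absurd hK h),
          co_atwA, if_pos, smul_eq_mul, mul_one]
        obtain ⟨hq1, hq2⟩ := Finset.mem_sigma.1 hK
        obtain ⟨hq2M, -⟩ := Finset.mem_sdiff.1 hq2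
        exact ⟨⟨he', hf', hd'⟩, Or.inl ⟨rfl, Finset.mem_insert.2
          (Or.inr (Finset.mem_singleton_self a')), Finset.insert_subset htA
            (Finset.singleton_subset_iff.2 (hMA hq2M))⟩⟩
      rw [co_add, hgco, zmod2_addself]
    · have hgco : co g e' {t, a'} = 0 := by
        rw [hg_def, co_sum]
        refine Finset.sum_eq_zero fun q hq => ?_
        rw [co_smul]
        refine hterm q hq fun h => hK (h ▸ hq)
      have hxco : co x e' {t, a'} = 0 := by
        refine mem_SuppIn.1 hxS e' _ fun hin => ?_
        refine hK (Finset.mem_sigma.2 ⟨Finset.mem_powersetCard.2 ⟨?_, he'⟩, ?_⟩)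
        · exact fun m hm => Finset.mem_erase.2 ⟨fun h => hte' (h ▸ hm), hin.1 hm⟩
        · refine Finset.mem_sdiff.2 ⟨Finset.mem_erase.2 ⟨ha't, hin.2
            (Finset.mem_insert.2 (Or.inr (Finset.mem_singleton_self a')))⟩, ha'e'⟩
      rw [co_add, hgco, hxco, add_zero]
  set x₁ : ATV n := x + g with hx1_def
  have hx1S : x₁ ∈ SuppIn (A.erase t) := by
    refine mem_SuppIn.2 fun e f hnot => ?_
    by_cases hval : s(e, f) ∈ ATP n
    · by_cases hA : e ⊆ A ∧ f ⊆ A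
      · obtain ⟨he, hf, hd⟩ := mem_ATP_iff.1 hval
        have htef : t ∈ e ∨ t ∈ f := by
          by_contra hno
          push_neg at hno
          exact hnot ⟨fun m hm => Finset.mem_erase.2 ⟨fun h => hno.1 (h ▸ hm), hA.1 hm⟩,
            fun m hm => Finset.mem_erase.2 ⟨fun h => hno.2 (h ▸ hm), hA.2 hm⟩⟩
        rcases htef with hte | htf
        · obtain ⟨a0, ha0t, rfl⟩ := edge_decomp he hte
          rw [co_symm]
          exact hkill f a0 (by rwa [show s(f, ({t, a0} : Edge n)) = s({t, a0}, f)
            from Sym2.eq_swap])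
        · obtain ⟨a0, ha0t, rfl⟩ := edge_decomp hf htf
          exact hkill e a0 hval
      · rw [hx1_def, co_add, mem_SuppIn.1 hxS e f hA, zero_add, hg_def, co_sum]
        refine Finset.sum_eq_zero fun q hq => ?_
        obtain ⟨hq1, hq2⟩ := Finset.mem_sigma.1 hq
        obtain ⟨hq1M, hq1c⟩ := Finset.mem_powersetCard.1 hq1
        rw [co_smul, co_atwA, if_neg, smul_zero]
        rintro ⟨-, ⟨heq, -, hfA⟩ | ⟨heq, -, heA⟩⟩
        · exact hA ⟨by rw [heq]; exact hq1M.trans hMA, hfA⟩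
        · exact hA ⟨heA, by rw [heq]; exact hq1M.trans hMA⟩
    · exact co_invalid _ hval
  have hx1P : PropsOn (A.erase t) x₁ :=
    PropsOn_mono hMA (hxP.add (WA_props hgW))
  have hx1W : x₁ ∈ WA (A.erase t) :=
    ih (A.erase t) (Finset.erase_ssubset htA) x₁ hx1S hx1P
  have hle : WA (A.erase t) ≤ WA A ⊔ (Tsupp t ⊓ SuppIn A) := by
    rw [WA, Submodule.span_le]
    rintro y ⟨e, v, heM, hec, hvM, hve, rfl⟩
    have hsplit : atwA (A.erase t) e v
        = atwA A e v + (atwA A e v + atwA (A.erase t) e v) := by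
      rw [← add_assoc, addself, zero_add]
    rw [hsplit]
    refine Submodule.add_mem _ (Submodule.mem_sup_left (Submodule.subset_span
      ⟨e, v, heM.trans hMA, hec, hMA hvM, hve, rfl⟩)) (Submodule.mem_sup_right ?_)
    refine Submodule.mem_inf.2 ⟨?_, ?_⟩
    · refine mem_Tsupp.2 fun e' f' hte htf => ?_
      rw [co_add]
      have hcongr : co (atwA A e v) e' f' = co (atwA (A.erase t) e v) e' f' := by
        rw [co_atwA, co_atwA]
        refine if_congr (and_congr_right fun _ => or_congr
          (and_congr_right fun _ => and_congr_right fun _ => ?_)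
          (and_congr_right fun _ => and_congr_right fun _ => ?_)) rfl rfl
        · exact ⟨fun h m hm => Finset.mem_erase.2 ⟨fun ht => htf (ht ▸ hm), h hm⟩,
            fun h => h.trans hMA⟩
        · exact ⟨fun h m hm => Finset.mem_erase.2 ⟨fun ht => hte (ht ▸ hm), h hm⟩,
            fun h => h.trans hMA⟩
      rw [← hcongr, zmod2_addself]
    · refine Submodule.add_mem _ (WA_le_SuppIn A (atwA_mem_WA (heM.trans hMA) hec
        (hMA hvM) hve)) (SuppIn_mono hMA (WA_le_SuppIn (A.erase t)
          (atwA_mem_WA heM hec hvM hve)))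
  obtain ⟨w, hwW, dd, hdd, hsum⟩ := Submodule.mem_sup.1 (hle hx1W)
  have hddT : dd ∈ Tsupp t := (Submodule.mem_inf.1 hdd).1
  have hddS : dd ∈ SuppIn A := (Submodule.mem_inf.1 hdd).2
  have hddval : dd = x₁ + w := by
    rw [← hsum, add_comm w dd, add_assoc, addself, add_zero]
  have hddP : PropsOn A dd := by
    rw [hddval, hx1_def]
    exact (hxP.add (WA_props hgW)).add (WA_props hwW)
  have hddW : dd ∈ WA A := tstep htA hddS hddT hddP
  have hxval : x = w + dd + g := by
    rw [hsum, hx1_def, add_assoc, addself, add_zero]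
  rw [hxval]
  exact Submodule.add_mem _ (Submodule.add_mem _ hwW hddW) hgW

end AT9

/-- Every vector with both the `K₅`-property and the `2K₃`-property lies in the
span `W` of the vectors `w₍e,v₎`; hence `W` is exactly the set of vectors with both
properties. -/
theorem stmt9 (n : ℕ) :
    (∀ x : ATV n, HasK5 n x → Has2K3 n x → x ∈ ATW n) ∧
    (ATW n : Set (ATV n)) = {x : ATV n | HasK5 n x ∧ Has2K3 n x} := by
  have hWA : ATW n = AT9.WA (Finset.univ : Finset (Fin n)) := by
    unfold ATW AT9.WA
    congr 1
    ext y
    constructor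
    · rintro ⟨e, v, hc, hv, rfl⟩
      exact ⟨e, v, Finset.subset_univ e, hc, Finset.mem_univ v, hv,
        (AT9.atwA_univ e v).symm⟩
    · rintro ⟨e, v, -, hc, -, hv, rfl⟩
      exact ⟨e, v, hc, hv, (AT9.atwA_univ e v).symm ▸ rfl⟩
  have hfwd : ∀ x : ATV n, HasK5 n x → Has2K3 n x → x ∈ ATW n := by
    intro x h5 h3
    rw [hWA]
    refine AT9.main_lemma Finset.univ x ?_ ?_
    · exact AT9.mem_SuppIn.2 fun e f hnot =>
        absurd ⟨Finset.subset_univ e, Finset.subset_univ f⟩ hnot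
    · exact ⟨fun S _ h5' => h5 S h5', fun T₁ T₂ _ _ h3' h4' hd => h3 T₁ T₂ h3' h4' hd⟩
  refine ⟨hfwd, ?_⟩
  ext x
  simp only [Set.mem_setOf_eq, SetLike.mem_coe]
  constructor
  · intro hx
    have hp : AT9.PropsOn Finset.univ x := AT9.WA_props (hWA ▸ hx)
    exact ⟨fun S h5 => hp.1 S (Finset.subset_univ S) h5,
      fun T₁ T₂ h1 h2 hd => hp.2 T₁ T₂ (Finset.subset_univ _) (Finset.subset_univ _) h1 h2 hd⟩
  · rintro ⟨h5, h3⟩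
    exact hfwd x h5 h3
end

section
/- Let n be a natural number and let i, j ∈ {1,…,n−1} be distinct. Define y_{i,j} := w₍{0,i}, j₎ + Σ_{k ∈ {1,…,n−1}, k ∉ {i,j}} w₍{j,k}, i₎ ∈ V. Then the coordinate of y_{i,j} at a pair {e,f} ∈ P equals 1 if and only if {e,f} = {{i,k}, {j,l}} for some distinct k, l ∈ {1,…,n−1} ∖ {i,j}. In particular, every coordinate of y_{i,j} at a pair containing an edge through vertex 0 is zero. -/
open scoped Classical

lemma pair_eq_of_mem {α : Type*} [DecidableEq α] {f : Finset α} (hf : f.card = 2) {j : α}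
    (hj : j ∈ f) : ∃ m, m ≠ j ∧ f = {j, m} := by
  obtain ⟨x, y, hxy, rfl⟩ := Finset.card_eq_two.mp hf
  rcases Finset.mem_insert.mp hj with rfl | hy
  · exact ⟨y, Ne.symm hxy, rfl⟩
  · rw [Finset.mem_singleton] at hy
    subst hy
    exact ⟨x, hxy, Finset.pair_comm x j⟩

lemma atw_eval {n : ℕ} (e0 : Finset (Fin n)) (v : Fin n) (e f : Finset (Fin n))
    (p : ATP n) (hp : (p : Sym2 (Finset (Fin n))) = s(e, f)) :
    atw n e0 v p = if (e = e0 ∧ v ∈ f) ∨ (f = e0 ∧ v ∈ e) then 1 else 0 := by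
  unfold atw
  have h : (∃ f' : Finset (Fin n), (p : Sym2 (Finset (Fin n))) = s(e0, f') ∧ v ∈ f') ↔
      ((e = e0 ∧ v ∈ f) ∨ (f = e0 ∧ v ∈ e)) := by
    constructor
    · rintro ⟨f', hf', hv⟩
      rw [hp, Sym2.eq_iff] at hf'
      rcases hf' with ⟨he, hf⟩ | ⟨he, hf⟩
      · exact Or.inl ⟨he, hf ▸ hv⟩
      · exact Or.inr ⟨hf, he ▸ hv⟩
    · rintro (⟨he, hv⟩ | ⟨hf, hv⟩)
      · exact ⟨f, by rw [hp, he], hv⟩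
      · exact ⟨e, by rw [hp, hf, Sym2.eq_swap], hv⟩
  simp only [h]

lemma sum_ind {α : Type*} (s : Finset α) (C : α → Prop) [DecidablePred C]
    [Decidable (∃ k ∈ s, C k)]
    (huniq : ∀ k ∈ s, ∀ k' ∈ s, C k → C k' → k = k') :
    (∑ k ∈ s, if C k then (1 : ZMod 2) else 0) = if ∃ k ∈ s, C k then 1 else 0 := by
  by_cases h : ∃ k ∈ s, C k
  · obtain ⟨k0, hk0, hC⟩ := h
    rw [Finset.sum_eq_single_of_mem k0 hk0, if_pos hC, if_pos ⟨k0, hk0, hC⟩]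
    intro b hb hne
    rw [if_neg]
    intro hCb
    exact hne (huniq b hb k0 hk0 hCb hC)
  · rw [if_neg h]
    apply Finset.sum_eq_zero
    intro k hk
    rw [if_neg fun hC => h ⟨k, hk, hC⟩]

theorem stmt10_aux (n : ℕ) (z i j : Fin n) (hz : (z : ℕ) = 0)
    (hi : 1 ≤ (i : ℕ)) (hj : 1 ≤ (j : ℕ)) (hij : i ≠ j) (p : ATP n) :
    ((atw n ({z, i} : Finset (Fin n)) j +
        ∑ k ∈ Finset.univ.filter (fun k : Fin n => 1 ≤ (k : ℕ) ∧ k ≠ i ∧ k ≠ j),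
          atw n ({j, k} : Finset (Fin n)) i) p = 1 ↔
      ∃ k l : Fin n, 1 ≤ (k : ℕ) ∧ 1 ≤ (l : ℕ) ∧ k ≠ l ∧ k ≠ i ∧ k ≠ j ∧ l ≠ i ∧ l ≠ j ∧
        (p : Sym2 (Finset (Fin n))) =
          s(({i, k} : Finset (Fin n)), ({j, l} : Finset (Fin n)))) := by
  obtain ⟨e, f, hef, he2, hf2, hdis⟩ := p.2
  have hd := Finset.disjoint_left.mp hdis
  set K := Finset.univ.filter (fun k : Fin n => 1 ≤ (k : ℕ) ∧ k ≠ i ∧ k ≠ j) with hK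
  have hKmem : ∀ k : Fin n, k ∈ K ↔ 1 ≤ (k : ℕ) ∧ k ≠ i ∧ k ≠ j := by
    intro k; simp [hK]
  -- uniqueness of the k with C k
  have huniq : ∀ k ∈ K, ∀ k' ∈ K,
      ((e = {j, k} ∧ i ∈ f) ∨ (f = {j, k} ∧ i ∈ e)) →
      ((e = {j, k'} ∧ i ∈ f) ∨ (f = {j, k'} ∧ i ∈ e)) → k = k' := by
    intro k hk k' hk'
    rw [hKmem] at hk hk'
    rintro (⟨he, -⟩ | ⟨hf, -⟩) (⟨he', -⟩ | ⟨hf', -⟩)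
    · have hmem : k ∈ ({j, k'} : Finset (Fin n)) := by rw [← he', he]; simp
      rcases Finset.mem_insert.mp hmem with h | h
      · exact absurd h hk.2.2
      · exact Finset.mem_singleton.mp h
    · have h1 : j ∈ e := by rw [he]; simp
      have h2 : j ∈ f := by rw [hf']; simp
      exact absurd h2 (hd h1)
    · have h1 : j ∈ e := by rw [he']; simp
      have h2 : j ∈ f := by rw [hf]; simp
      exact absurd h2 (hd h1)
    · have hmem : k ∈ ({j, k'} : Finset (Fin n)) := by rw [← hf', hf]; simp
      rcases Finset.mem_insert.mp hmem with h | h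
      · exact absurd h hk.2.2
      · exact Finset.mem_singleton.mp h
  -- A implies B
  have hAB : ((e = {z, i} ∧ j ∈ f) ∨ (f = {z, i} ∧ j ∈ e)) →
      ∃ k ∈ K, ((e = {j, k} ∧ i ∈ f) ∨ (f = {j, k} ∧ i ∈ e)) := by
    rintro (⟨he, hjf⟩ | ⟨hf, hje⟩)
    · obtain ⟨m, hmj, hfm⟩ := pair_eq_of_mem hf2 hjf
      have hmf : m ∈ f := by rw [hfm]; simp
      have hme : m ∉ e := fun h => hd h hmf
      have hmz : m ≠ z := fun h => hme (by rw [he, h]; simp)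
      have hmi : m ≠ i := fun h => hme (by rw [he, h]; simp)
      have hm1 : 1 ≤ (m : ℕ) := by
        rcases Nat.eq_zero_or_pos (m : ℕ) with h0 | h1
        · exact absurd (Fin.ext (by omega) : m = z) hmz
        · exact h1
      exact ⟨m, (hKmem m).mpr ⟨hm1, hmi, hmj⟩, Or.inr ⟨hfm, by rw [he]; simp⟩⟩
    · obtain ⟨m, hmj, hem⟩ := pair_eq_of_mem he2 hje
      have hme : m ∈ e := by rw [hem]; simp
      have hmf : m ∉ f := fun h => hd hme h
      have hmz : m ≠ z := fun h => hmf (by rw [hf, h]; simp)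
      have hmi : m ≠ i := fun h => hmf (by rw [hf, h]; simp)
      have hm1 : 1 ≤ (m : ℕ) := by
        rcases Nat.eq_zero_or_pos (m : ℕ) with h0 | h1
        · exact absurd (Fin.ext (by omega) : m = z) hmz
        · exact h1
      exact ⟨m, (hKmem m).mpr ⟨hm1, hmi, hmj⟩, Or.inl ⟨hem, by rw [hf]; simp⟩⟩
  have hsum : (∑ k ∈ K, if (e = {j, k} ∧ i ∈ f) ∨ (f = {j, k} ∧ i ∈ e)
        then (1 : ZMod 2) else 0) =
      if ∃ k ∈ K, ((e = {j, k} ∧ i ∈ f) ∨ (f = {j, k} ∧ i ∈ e)) then 1 else 0 :=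
    sum_ind K _ huniq
  rw [Pi.add_apply, Finset.sum_apply, atw_eval ({z, i}) j e f p hef,
    Finset.sum_congr rfl (fun k _ => atw_eval ({j, k}) i e f p hef), hsum]
  constructor
  · intro h1
    by_cases hA : (e = {z, i} ∧ j ∈ f) ∨ (f = {z, i} ∧ j ∈ e)
    · rw [if_pos hA, if_pos (hAB hA)] at h1
      exact absurd h1 (by decide)
    · rw [if_neg hA] at h1
      by_cases hB : ∃ k ∈ K, ((e = {j, k} ∧ i ∈ f) ∨ (f = {j, k} ∧ i ∈ e))
      · obtain ⟨k, hkK, hC⟩ := hB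
        rw [hKmem] at hkK
        obtain ⟨hk1, hki, hkj⟩ := hkK
        rcases hC with ⟨heq, hif⟩ | ⟨hfq, hie⟩
        · obtain ⟨m, hmi, hfm⟩ := pair_eq_of_mem hf2 hif
          have hmf : m ∈ f := by rw [hfm]; simp
          have hme : m ∉ e := fun h => hd h hmf
          have hmj : m ≠ j := fun h => hme (by rw [heq, h]; simp)
          have hmk : m ≠ k := fun h => hme (by rw [heq, h]; simp)
          have hmz : m ≠ z := fun h =>
            hA (Or.inr ⟨by rw [hfm, h, Finset.pair_comm], by rw [heq]; simp⟩)
          have hm1 : 1 ≤ (m : ℕ) := by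
            rcases Nat.eq_zero_or_pos (m : ℕ) with h0 | h1'
            · exact absurd (Fin.ext (by omega) : m = z) hmz
            · exact h1'
          refine ⟨m, k, hm1, hk1, hmk, hmi, hmj, hki, hkj, ?_⟩
          rw [hef, heq, hfm, Finset.pair_comm i m]
          exact Sym2.eq_swap
        · obtain ⟨m, hmi, hem⟩ := pair_eq_of_mem he2 hie
          have hme : m ∈ e := by rw [hem]; simp
          have hmf : m ∉ f := fun h => hd hme h
          have hmj : m ≠ j := fun h => hmf (by rw [hfq, h]; simp)
          have hmk : m ≠ k := fun h => hmf (by rw [hfq, h]; simp)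
          have hmz : m ≠ z := fun h =>
            hA (Or.inl ⟨by rw [hem, h, Finset.pair_comm], by rw [hfq]; simp⟩)
          have hm1 : 1 ≤ (m : ℕ) := by
            rcases Nat.eq_zero_or_pos (m : ℕ) with h0 | h1'
            · exact absurd (Fin.ext (by omega) : m = z) hmz
            · exact h1'
          refine ⟨m, k, hm1, hk1, hmk, hmi, hmj, hki, hkj, ?_⟩
          rw [hef, hem, hfq]
      · rw [if_neg hB] at h1
        exact absurd h1 (by decide)
  · rintro ⟨k, l, hk1, hl1, hkl, hki, hkj, hli, hlj, hps⟩
    have hne1 : ({i, k} : Finset (Fin n)) ≠ {z, i} := by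
      intro h
      have hm : k ∈ ({z, i} : Finset (Fin n)) := by rw [← h]; simp
      rcases Finset.mem_insert.mp hm with h' | h'
      · rw [h'] at hk1; omega
      · exact hki (Finset.mem_singleton.mp h')
    have hne2 : ({j, l} : Finset (Fin n)) ≠ {z, i} := by
      intro h
      have hm : j ∈ ({z, i} : Finset (Fin n)) := by rw [← h]; simp
      rcases Finset.mem_insert.mp hm with h' | h'
      · rw [h'] at hj; omega
      · exact hij (Finset.mem_singleton.mp h').symm
    have heq := hef.symm.trans hps
    rw [Sym2.eq_iff] at heq
    have hlK : l ∈ K := (hKmem l).mpr ⟨hl1, hli, hlj⟩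
    rcases heq with ⟨he, hf⟩ | ⟨he, hf⟩
    · have hB : ∃ k' ∈ K, ((e = {j, k'} ∧ i ∈ f) ∨ (f = {j, k'} ∧ i ∈ e)) :=
        ⟨l, hlK, Or.inr ⟨hf, by rw [he]; simp⟩⟩
      have hnA : ¬((e = {z, i} ∧ j ∈ f) ∨ (f = {z, i} ∧ j ∈ e)) := by
        rintro (⟨hA1, -⟩ | ⟨hA1, -⟩)
        · exact hne1 (he ▸ hA1)
        · exact hne2 (hf ▸ hA1)
      rw [if_neg hnA, if_pos hB]
      decide
    · have hB : ∃ k' ∈ K, ((e = {j, k'} ∧ i ∈ f) ∨ (f = {j, k'} ∧ i ∈ e)) :=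
        ⟨l, hlK, Or.inl ⟨he, by rw [hf]; simp⟩⟩
      have hnA : ¬((e = {z, i} ∧ j ∈ f) ∨ (f = {z, i} ∧ j ∈ e)) := by
        rintro (⟨hA1, -⟩ | ⟨hA1, -⟩)
        · exact hne2 (he ▸ hA1)
        · exact hne1 (hf ▸ hA1)
      rw [if_neg hnA, if_pos hB]
      decide

/-- The coordinates of `y_{i,j} = w₍{0,i},j₎ + ∑_{k ∈ {1,…,n-1} \ {i,j}} w₍{j,k},i₎`:
its coordinate at a pair `{e,f} ∈ P` is `1` iff the pair has the form
`{{i,k}, {j,l}}` with `k, l ∈ {1,…,n-1} \ {i,j}` distinct; in particular all its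
coordinates at pairs containing an edge through vertex `0` vanish. -/
theorem stmt10 (n : ℕ) (hn : 2 ≤ n) (i j : Fin n)
    (hi : 1 ≤ (i : ℕ)) (hj : 1 ≤ (j : ℕ)) (hij : i ≠ j) :
    (∀ p : ATP n,
      ((atw n ({⟨0, by omega⟩, i} : Finset (Fin n)) j +
          ∑ k ∈ Finset.univ.filter
              (fun k : Fin n => 1 ≤ (k : ℕ) ∧ k ≠ i ∧ k ≠ j),
            atw n ({j, k} : Finset (Fin n)) i) p = 1 ↔
        ∃ k l : Fin n, 1 ≤ (k : ℕ) ∧ 1 ≤ (l : ℕ) ∧ k ≠ l ∧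
          k ≠ i ∧ k ≠ j ∧ l ≠ i ∧ l ≠ j ∧
          (p : Sym2 (Finset (Fin n))) =
            s(({i, k} : Finset (Fin n)), ({j, l} : Finset (Fin n))))) ∧
    (∀ p : ATP n,
      (∃ e ∈ (p : Sym2 (Finset (Fin n))), (⟨0, by omega⟩ : Fin n) ∈ e) →
        (atw n ({⟨0, by omega⟩, i} : Finset (Fin n)) j +
          ∑ k ∈ Finset.univ.filter
              (fun k : Fin n => 1 ≤ (k : ℕ) ∧ k ≠ i ∧ k ≠ j),
            atw n ({j, k} : Finset (Fin n)) i) p = 0) := by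
  refine ⟨fun p => stmt10_aux n _ i j rfl hi hj hij p, fun p hp => ?_⟩
  have key := stmt10_aux n ⟨0, by omega⟩ i j rfl hi hj hij p
  have hne1 : (atw n ({⟨0, by omega⟩, i} : Finset (Fin n)) j +
      ∑ k ∈ Finset.univ.filter (fun k : Fin n => 1 ≤ (k : ℕ) ∧ k ≠ i ∧ k ≠ j),
        atw n ({j, k} : Finset (Fin n)) i) p ≠ 1 := by
    intro h1
    obtain ⟨k, l, hk1, hl1, hkl, hki, hkj, hli, hlj, hps⟩ := key.mp h1
    obtain ⟨e, he, h0e⟩ := hp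
    rw [hps, Sym2.mem_iff] at he
    rcases he with rfl | rfl
    · rcases Finset.mem_insert.mp h0e with h | h
      · have := congrArg Fin.val h; simp at this; omega
      · have := congrArg Fin.val (Finset.mem_singleton.mp h); simp at this; omega
    · rcases Finset.mem_insert.mp h0e with h | h
      · have := congrArg Fin.val h; simp at this; omega
      · have := congrArg Fin.val (Finset.mem_singleton.mp h); simp at this; omega
  have : ∀ x : ZMod 2, x ≠ 1 → x = 0 := by decide
  exact this _ hne1
end

section
/- Let n be a natural number and let x ∈ V be a vector having the 2K₃-property. If x({e,f}) = 0 for every pair {e,f} ∈ P such that some edge of the pair contains vertex 0 or vertex 1, then x = 0. -/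
open scoped Classical

/-- If `x` has the `2K₃`-property and vanishes on every pair one of whose edges
contains vertex `0` or vertex `1`, then `x = 0`. -/
theorem stmt11 (n : ℕ) (hn : 2 ≤ n) (x : ATV n) (h2K3 : Has2K3 n x)
    (h01 : ∀ p : ATP n,
      (∃ e ∈ (p : Sym2 (Finset (Fin n))),
        (⟨0, by omega⟩ : Fin n) ∈ e ∨ (⟨1, by omega⟩ : Fin n) ∈ e) → x p = 0) :
    x = 0 := by
  funext p
  show x p = 0
  set v0 : Fin n := ⟨0, by omega⟩ with hv0
  set v1 : Fin n := ⟨1, by omega⟩ with hv1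
  by_cases hc : ∃ e ∈ (p : Sym2 (Finset (Fin n))), v0 ∈ e ∨ v1 ∈ e
  · exact h01 p hc
  push_neg at hc
  obtain ⟨e, f, hp, he2, hf2, hef⟩ := p.2
  have he : e ∈ (p : Sym2 (Finset (Fin n))) := by rw [hp]; exact Sym2.mem_mk_left e f
  have hf : f ∈ (p : Sym2 (Finset (Fin n))) := by rw [hp]; exact Sym2.mem_mk_right e f
  obtain ⟨h0e, h1e⟩ := hc e he
  obtain ⟨h0f, h1f⟩ := hc f hf
  have hv01 : v0 ≠ v1 := by simp [hv0, hv1, Fin.ext_iff]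
  set T₁ := insert v0 e with hT₁
  set T₂ := insert v1 f with hT₂
  have hT1c : T₁.card = 3 := by rw [hT₁, Finset.card_insert_of_notMem h0e, he2]
  have hT2c : T₂.card = 3 := by rw [hT₂, Finset.card_insert_of_notMem h1f, hf2]
  have hdisj : Disjoint T₁ T₂ := by
    rw [Finset.disjoint_left]
    intro a ha ha'
    rw [hT₁, Finset.mem_insert] at ha
    rw [hT₂, Finset.mem_insert] at ha'
    rcases ha with rfl | ha
    · rcases ha' with h | h
      · exact hv01 h
      · exact h0f h
    · rcases ha' with rfl | h
      · exact h1e ha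
      · exact (Finset.disjoint_left.mp hef ha) h
  have key := h2K3 T₁ T₂ hT1c hT2c hdisj
  rw [Fintype.sum_eq_single p ?side] at key
  · rwa [if_pos ⟨e, f, hp, Finset.subset_insert _ _, Finset.subset_insert _ _⟩] at key
  case side =>
    intro q hq
    split_ifs with hcond
    · obtain ⟨e', f', hq', he'T, hf'T⟩ := hcond
      obtain ⟨a, b, hab, ha2, hb2, hd⟩ := q.2
      rw [hab] at hq'
      have hcards : e'.card = 2 ∧ f'.card = 2 := by
        rcases Sym2.eq_iff.mp hq' with ⟨rfl, rfl⟩ | ⟨rfl, rfl⟩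
        · exact ⟨ha2, hb2⟩
        · exact ⟨hb2, ha2⟩
      have he'mem : e' ∈ (q : Sym2 (Finset (Fin n))) := by
        rw [hab, hq']; exact Sym2.mem_mk_left _ _
      have hf'mem : f' ∈ (q : Sym2 (Finset (Fin n))) := by
        rw [hab, hq']; exact Sym2.mem_mk_right _ _
      by_cases h0 : v0 ∈ e'
      · exact h01 q ⟨e', he'mem, Or.inl h0⟩
      by_cases h1 : v1 ∈ f'
      · exact h01 q ⟨f', hf'mem, Or.inr h1⟩
      have hee : e' = e := by
        apply Finset.eq_of_subset_of_card_le
        · intro c hcmem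
          rcases Finset.mem_insert.mp (he'T hcmem) with rfl | h
          · exact absurd hcmem h0
          · exact h
        · rw [he2, hcards.1]
      have hff : f' = f := by
        apply Finset.eq_of_subset_of_card_le
        · intro c hcmem
          rcases Finset.mem_insert.mp (hf'T hcmem) with rfl | h
          · exact absurd hcmem h1
          · exact h
        · rw [hf2, hcards.2]
      exact absurd (Subtype.ext (by rw [hab, hq', hee, hff, ← hp])) hq
    · rfl
end

section
/- For every k ≥ 2 and every i with 1 ≤ i ≤ k−1, let ρᵢ : F → F be the group homomorphism sending the generator xᵢ to 1 and fixing every other generator. Then ρᵢ(g_k) lies in the subgroup of F generated by {x₁, …, x_{i−1}} (the trivial subgroup when i = 1). In other words, with respect to the order x₁ ≺ x₂ ≺ ⋯ ≺ x_{k−2} ≺ x_{k−1} ≺ x₀, killing the generator xᵢ eliminates from g_k all occurrences of generators x_j with xᵢ ≺ x_j. -/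
/-- The descending product of generators `x_{k-2} · x_{k-3} ⋯ x₁`. -/
def hangDesc (k : ℕ) : FreeGroup ℕ :=
  ((List.range (k - 2)).map fun j => FreeGroup.of (k - 2 - j)).prod

/-- The word substituted for `x_{k-1}` when passing from `g_k` to `g_{k+1}`:
`x_k⁻¹ · x₀⁻¹ · x₁⁻¹ ⋯ x_{k-2}⁻¹ · x_{k-1} · x_{k-2} ⋯ x₁ · x₀ · x_k`. -/
def hangSub (k : ℕ) : FreeGroup ℕ :=
  (FreeGroup.of k)⁻¹ * (FreeGroup.of 0)⁻¹ * (hangDesc k)⁻¹ *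
    FreeGroup.of (k - 1) * hangDesc k * FreeGroup.of 0 * FreeGroup.of k

/-- The substitution homomorphism `φ_k`, sending the generator `x_{k-1}` to the
word `hangSub k` and fixing every other generator. -/
def hangPhi (k : ℕ) : FreeGroup ℕ →* FreeGroup ℕ :=
  FreeGroup.lift fun m => if m = k - 1 then hangSub k else FreeGroup.of m

/-- The picture-hanging elements `g_k ∈ FreeGroup ℕ`:
`g₂ = x₀·x₁⁻¹·x₀⁻¹`, `g₃ = x₀·x₂⁻¹·x₀⁻¹·x₁⁻¹·x₀·x₂·x₀⁻¹`, and
`g_{k+1} = φ_k (g_k)` for `k ≥ 3`. -/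
def hangG : ℕ → FreeGroup ℕ
  | 0 => 1
  | 1 => 1
  | 2 => FreeGroup.of 0 * (FreeGroup.of 1)⁻¹ * (FreeGroup.of 0)⁻¹
  | 3 => FreeGroup.of 0 * (FreeGroup.of 2)⁻¹ * (FreeGroup.of 0)⁻¹ *
      (FreeGroup.of 1)⁻¹ * FreeGroup.of 0 * FreeGroup.of 2 * (FreeGroup.of 0)⁻¹
  | k + 4 => hangPhi (k + 3) (hangG (k + 3))

namespace Hang


abbrev F := FreeGroup ℕ

def rho (i : ℕ) : F →* F := FreeGroup.lift fun m => if m = i then 1 else FreeGroup.of m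

def wk (k : ℕ) : F := hangDesc k * FreeGroup.of 0

def theta (k : ℕ) : F →* F :=
  FreeGroup.lift fun m =>
    if m = k - 1 then (wk k)⁻¹ * FreeGroup.of (k - 1) * wk k else FreeGroup.of m

@[simp] lemma rho_of (i m : ℕ) :
    rho i (FreeGroup.of m) = if m = i then 1 else FreeGroup.of m := by simp [rho]

@[simp] lemma theta_of (k m : ℕ) :
    theta k (FreeGroup.of m) =
      if m = k - 1 then (wk k)⁻¹ * FreeGroup.of (k - 1) * wk k else FreeGroup.of m := by
  simp [theta]

@[simp] lemma hangPhi_of (k m : ℕ) :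
    hangPhi k (FreeGroup.of m) = if m = k - 1 then hangSub k else FreeGroup.of m := by
  simp [hangPhi]

lemma eq_on_closure {f g : F →* F} {S : Set ℕ}
    (h : ∀ m ∈ S, f (FreeGroup.of m) = g (FreeGroup.of m)) {x : F}
    (hx : x ∈ Subgroup.closure (FreeGroup.of '' S)) : f x = g x := by
  induction hx using Subgroup.closure_induction with
  | mem x hx => obtain ⟨m, hm, rfl⟩ := hx; exact h m hm
  | one => simp
  | mul x y _ _ hx hy => simp [map_mul, hx, hy]
  | inv x _ hx => simp [map_inv, hx]

lemma maps_closure {f : F →* F} {S T : Set ℕ}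
    (h : ∀ m ∈ S, f (FreeGroup.of m) ∈ Subgroup.closure (FreeGroup.of '' T)) {x : F}
    (hx : x ∈ Subgroup.closure (FreeGroup.of '' S)) : f x ∈ Subgroup.closure (FreeGroup.of '' T) := by
  induction hx using Subgroup.closure_induction with
  | mem x hx => obtain ⟨m, hm, rfl⟩ := hx; exact h m hm
  | one => rw [map_one]; exact one_mem _
  | mul x y _ _ hx hy => rw [map_mul]; exact mul_mem hx hy
  | inv x _ hx => rw [map_inv]; exact inv_mem hx

lemma hangDesc_mem {k : ℕ} {S : Set ℕ} (h : ∀ m, 1 ≤ m → m + 2 ≤ k → m ∈ S) :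
    hangDesc k ∈ Subgroup.closure (FreeGroup.of '' S) := by
  apply Subgroup.list_prod_mem
  intro x hx
  simp only [List.mem_map, List.mem_range] at hx
  obtain ⟨j, hj, rfl⟩ := hx
  exact Subgroup.subset_closure ⟨k - 2 - j, h _ (by omega) (by omega), rfl⟩

lemma map_hangDesc {f : F →* F} {k : ℕ}
    (h : ∀ m, 1 ≤ m → m + 2 ≤ k → f (FreeGroup.of m) = FreeGroup.of m) :
    f (hangDesc k) = hangDesc k := by
  rw [hangDesc, map_list_prod, List.map_map]
  congr 1
  apply List.map_congr_left
  intro j hj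
  simp only [List.mem_range] at hj
  exact h _ (by omega) (by omega)

lemma hangDesc_succ {k : ℕ} (hk : 2 ≤ k) :
    hangDesc (k + 1) = FreeGroup.of (k - 1) * hangDesc k := by
  obtain ⟨n, rfl⟩ : ∃ n, k = n + 2 := ⟨k - 2, by omega⟩
  show ((List.range (n + 1)).map fun j => FreeGroup.of (n + 1 - j)).prod = _
  rw [List.range_succ_eq_map, List.map_cons, List.prod_cons, List.map_map]
  simp only [Function.comp_def, Nat.succ_sub_succ]
  rfl

lemma hangG_succ {k : ℕ} (hk : 3 ≤ k) : hangG (k + 1) = hangPhi k (hangG k) := by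
  obtain ⟨n, rfl⟩ : ∃ n, k = n + 3 := ⟨k - 3, by omega⟩
  rfl

lemma hangG_supp : ∀ k, hangG k ∈ Subgroup.closure (FreeGroup.of '' {m | m < k})
  | 0 => one_mem _
  | 1 => one_mem _
  | 2 => by
    refine mul_mem (mul_mem ?_ (inv_mem ?_)) (inv_mem ?_) <;>
      exact Subgroup.subset_closure ⟨_, by norm_num, rfl⟩
  | 3 => by
    refine mul_mem (mul_mem (mul_mem (mul_mem (mul_mem (mul_mem ?_ (inv_mem ?_)) (inv_mem ?_))
      (inv_mem ?_)) ?_) ?_) (inv_mem ?_) <;>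
      exact Subgroup.subset_closure ⟨_, by norm_num, rfl⟩
  | (k + 4) => by
    show hangPhi (k + 3) (hangG (k + 3)) ∈ _
    refine maps_closure (fun m hm => ?_) (hangG_supp (k + 3))
    simp only [Set.mem_setOf_eq] at hm
    rw [hangPhi_of]
    by_cases h : m = k + 3 - 1
    · rw [if_pos h, hangSub]
      refine mul_mem (mul_mem (mul_mem (mul_mem (mul_mem (mul_mem (inv_mem ?_) (inv_mem ?_))
        (inv_mem ?_)) ?_) ?_) ?_) ?_
      · exact Subgroup.subset_closure ⟨_, by simp, rfl⟩
      · exact Subgroup.subset_closure ⟨_, by simp, rfl⟩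
      · exact hangDesc_mem fun m h1 h2 => by simp only [Set.mem_setOf_eq]; omega
      · exact Subgroup.subset_closure ⟨_, by simp only [Set.mem_setOf_eq]; omega, rfl⟩
      · exact hangDesc_mem fun m h1 h2 => by simp only [Set.mem_setOf_eq]; omega
      · exact Subgroup.subset_closure ⟨_, by simp, rfl⟩
      · exact Subgroup.subset_closure ⟨_, by simp, rfl⟩
    · rw [if_neg h]
      exact Subgroup.subset_closure ⟨_, by simp only [Set.mem_setOf_eq]; omega, rfl⟩

def phi' (i k : ℕ) : F →* F :=
  FreeGroup.lift fun m => if m = k - 1 then rho i (hangSub k) else FreeGroup.of m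

def sigma (k : ℕ) : F →* F :=
  FreeGroup.lift fun m =>
    if m = k - 1 then
      (FreeGroup.of (k-1))⁻¹ * (FreeGroup.of k)⁻¹ * FreeGroup.of (k-1) * FreeGroup.of k *
        FreeGroup.of (k-1)
    else FreeGroup.of m

@[simp] lemma phi'_of (i k m : ℕ) :
    phi' i k (FreeGroup.of m) = if m = k - 1 then rho i (hangSub k) else FreeGroup.of m := by
  simp [phi']

@[simp] lemma sigma_of (k m : ℕ) :
    sigma k (FreeGroup.of m) =
      if m = k - 1 then
        (FreeGroup.of (k-1))⁻¹ * (FreeGroup.of k)⁻¹ * FreeGroup.of (k-1) * FreeGroup.of k *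
          FreeGroup.of (k-1)
      else FreeGroup.of m := by
  simp [sigma]

lemma rho_comp_phi {i k : ℕ} (h : i ≠ k - 1) (x : F) :
    rho i (hangPhi k x) = phi' i k (rho i x) := by
  have : (rho i).comp (hangPhi k) = (phi' i k).comp (rho i) := by
    apply FreeGroup.ext_hom
    intro m
    simp only [MonoidHom.comp_apply, hangPhi_of, rho_of, phi'_of]
    by_cases h1 : m = k - 1
    · subst h1
      simp [Ne.symm h]
    · by_cases h2 : m = i <;> simp [h1, h2, h]
  exact DFunLike.congr_fun this x

lemma rho_pred_hangSub {k : ℕ} (hk : 2 ≤ k) : rho (k - 1) (hangSub k) = 1 := by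
  have hD : rho (k-1) (hangDesc k) = hangDesc k :=
    map_hangDesc fun m h1 h2 => by rw [rho_of, if_neg (by omega)]
  have h0 : rho (k-1) (FreeGroup.of 0) = FreeGroup.of 0 := by
    rw [rho_of, if_neg (by omega)]
  have hk' : rho (k-1) (FreeGroup.of k) = FreeGroup.of k := by
    rw [rho_of, if_neg (by omega)]
  have hm : rho (k-1) (FreeGroup.of (k-1)) = 1 := by rw [rho_of, if_pos rfl]
  simp only [hangSub, map_mul, map_inv, hD, h0, hk', hm]
  group

lemma rho_pred_comp {k : ℕ} (hk : 2 ≤ k) (x : F) :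
    rho (k-1) (hangPhi k x) = rho (k-1) x := by
  have : (rho (k-1)).comp (hangPhi k) = rho (k-1) := by
    apply FreeGroup.ext_hom
    intro m
    simp only [MonoidHom.comp_apply, hangPhi_of]
    by_cases h1 : m = k - 1
    · subst h1
      rw [if_pos rfl, rho_pred_hangSub hk, rho_of, if_pos rfl]
    · rw [if_neg h1]
  exact DFunLike.congr_fun this x

lemma rho_top_hangSub {k : ℕ} (hk : 2 ≤ k) :
    rho k (hangSub k) = (wk k)⁻¹ * FreeGroup.of (k-1) * wk k := by
  have hD : rho k (hangDesc k) = hangDesc k :=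
    map_hangDesc fun m h1 h2 => by rw [rho_of, if_neg (by omega)]
  have h0 : rho k (FreeGroup.of 0) = FreeGroup.of 0 := by
    rw [rho_of, if_neg (by omega)]
  have hm : rho k (FreeGroup.of (k-1)) = FreeGroup.of (k-1) := by
    rw [rho_of, if_neg (by omega)]
  have hk' : rho k (FreeGroup.of k) = 1 := by rw [rho_of, if_pos rfl]
  simp only [hangSub, map_mul, map_inv, hD, h0, hm, hk', wk]
  group

lemma rho_top_comp {k : ℕ} (hk : 2 ≤ k) (x : F) :
    rho k (hangPhi k x) = theta k (rho k x) := by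
  have : (rho k).comp (hangPhi k) = (theta k).comp (rho k) := by
    apply FreeGroup.ext_hom
    intro m
    by_cases h1 : m = k - 1
    · subst h1
      simp [rho_top_hangSub hk, show ¬(k - 1 = k) by omega]
    · by_cases h2 : m = k
      · subst h2
        simp [h1]
      · simp [h1, h2]
  exact DFunLike.congr_fun this x

lemma theta_succ_hangSub {k : ℕ} (hk : 2 ≤ k) :
    theta (k+1) (hangSub k) = sigma k ((wk k)⁻¹ * FreeGroup.of (k-1) * wk k) := by
  have hD1 : theta (k+1) (hangDesc k) = hangDesc k :=
    map_hangDesc fun m h1 h2 => by rw [theta_of, if_neg (by omega)]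
  have h0 : theta (k+1) (FreeGroup.of 0) = FreeGroup.of 0 := by
    rw [theta_of, if_neg (by omega)]
  have hm : theta (k+1) (FreeGroup.of (k-1)) = FreeGroup.of (k-1) := by
    rw [theta_of, if_neg (by omega)]
  have hsub : k + 1 - 1 = k := by omega
  have hk' : theta (k+1) (FreeGroup.of k) = (wk (k+1))⁻¹ * FreeGroup.of k * wk (k+1) := by
    rw [theta_of, hsub, if_pos rfl]
  have hw : wk (k+1) = FreeGroup.of (k-1) * wk k := by
    rw [wk, wk, hangDesc_succ hk, mul_assoc]
  have hD2 : sigma k (hangDesc k) = hangDesc k :=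
    map_hangDesc fun m h1 h2 => by rw [sigma_of, if_neg (by omega)]
  have h0' : sigma k (FreeGroup.of 0) = FreeGroup.of 0 := by
    rw [sigma_of, if_neg (by omega)]
  have hm' : sigma k (FreeGroup.of (k-1)) =
      (FreeGroup.of (k-1))⁻¹ * (FreeGroup.of k)⁻¹ * FreeGroup.of (k-1) * FreeGroup.of k *
        FreeGroup.of (k-1) := by
    rw [sigma_of, if_pos rfl]
  simp only [hangSub, map_mul, map_inv, hD1, h0, hm, hk', hw, hD2, h0', hm', wk, hangDesc_succ hk]
  group

lemma theta_succ_comp {k : ℕ} (hk : 2 ≤ k) {x : F}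
    (hx : x ∈ Subgroup.closure (FreeGroup.of '' {m | m < k})) :
    theta (k+1) (hangPhi k x) = sigma k (theta k x) := by
  refine eq_on_closure (f := (theta (k+1)).comp (hangPhi k))
    (g := (sigma k).comp (theta k)) (fun m hm => ?_) hx
  have hm' : m < k := hm
  simp only [MonoidHom.comp_apply, hangPhi_of, theta_of]
  by_cases h1 : m = k - 1
  · subst h1
    rw [if_pos rfl, if_pos rfl, theta_succ_hangSub hk]
  · rw [if_neg h1, if_neg h1, theta_of, if_neg (by omega), sigma_of, if_neg h1]

lemma rho_fix {k : ℕ} {x : F} (hx : x ∈ Subgroup.closure (FreeGroup.of '' {m : ℕ | m < k})) :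
    rho k x = x := by
  have : rho k x = MonoidHom.id F x :=
    eq_on_closure (fun m hm => by
      have h : m < k := hm
      rw [rho_of, if_neg (by omega)]; rfl) hx
  simpa using this

lemma main : ∀ k, 3 ≤ k →
    (∀ i, 1 ≤ i → i ≤ k - 1 →
      rho i (hangG k) ∈ Subgroup.closure (FreeGroup.of '' {m : ℕ | 1 ≤ m ∧ m < i})) ∧
    theta k (hangG k) ∈ Subgroup.closure (FreeGroup.of '' {m : ℕ | 1 ≤ m ∧ m < k}) := by
  intro k hk
  induction k, hk using Nat.le_induction with
  | base =>
    have e3 : hangG 3 = FreeGroup.of 0 * (FreeGroup.of 2)⁻¹ * (FreeGroup.of 0)⁻¹ *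
        (FreeGroup.of 1)⁻¹ * FreeGroup.of 0 * FreeGroup.of 2 * (FreeGroup.of 0)⁻¹ := rfl
    constructor
    · intro i hi1 hi2
      interval_cases i
      · have h : rho 1 (hangG 3) = 1 := by
          simp only [e3, map_mul, map_inv, rho_of]
          norm_num
        rw [h]; exact one_mem _
      · have h : rho 2 (hangG 3) = (FreeGroup.of 1)⁻¹ := by
          simp only [e3, map_mul, map_inv, rho_of]
          norm_num
        rw [h]
        exact inv_mem (Subgroup.subset_closure ⟨1, ⟨le_refl 1, one_lt_two⟩, rfl⟩)
    · have h : theta 3 (hangG 3) = (FreeGroup.of 1)⁻¹ * ((FreeGroup.of 2)⁻¹ *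
          ((FreeGroup.of 1)⁻¹ * (FreeGroup.of 2 * FreeGroup.of 1))) := by
        have hd : hangDesc 3 = FreeGroup.of 1 := by rw [hangDesc]; norm_num [List.range_succ]
        have hw : wk 3 = FreeGroup.of 1 * FreeGroup.of 0 := by rw [wk, hd]
        simp only [e3, map_mul, map_inv, theta_of]
        norm_num [hw]
        group
      rw [h]
      have m1 : FreeGroup.of 1 ∈ Subgroup.closure (FreeGroup.of '' {m : ℕ | 1 ≤ m ∧ m < 3}) :=
        Subgroup.subset_closure ⟨1, ⟨by norm_num, by norm_num⟩, rfl⟩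
      have m2 : FreeGroup.of 2 ∈ Subgroup.closure (FreeGroup.of '' {m : ℕ | 1 ≤ m ∧ m < 3}) :=
        Subgroup.subset_closure ⟨2, ⟨by norm_num, by norm_num⟩, rfl⟩
      exact mul_mem (inv_mem m1) (mul_mem (inv_mem m2) (mul_mem (inv_mem m1) (mul_mem m2 m1)))
  | succ k hk ih =>
    obtain ⟨P, Q⟩ := ih
    have hsupp := hangG_supp k
    have hGs : hangG (k+1) = hangPhi k (hangG k) := hangG_succ hk
    constructor
    · intro i hi1 hi2
      have hi2' : i ≤ k := by omega
      by_cases hik : i = k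
      · subst hik
        rw [hGs, rho_top_comp (by omega), rho_fix hsupp]
        exact Q
      · by_cases hik1 : i = k - 1
        · rw [hGs, hik1, rho_pred_comp (by omega), ← hik1]
          exact P i hi1 (by omega)
        · rw [hGs, rho_comp_phi hik1]
          have hfix : phi' i k (rho i (hangG k)) = MonoidHom.id F (rho i (hangG k)) :=
            eq_on_closure (fun m hm => by
              have h1 : 1 ≤ m := hm.1
              have h2 : m < i := hm.2
              rw [phi'_of, if_neg (by omega)]; rfl) (P i hi1 (by omega))
          rw [hfix]
          exact P i hi1 (by omega)
    · rw [hGs, theta_succ_comp (by omega) hsupp]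
      refine maps_closure (fun m hm => ?_) Q
      obtain ⟨h1, h2⟩ := hm
      rw [sigma_of]
      by_cases h : m = k - 1
      · rw [if_pos h]
        have ma : FreeGroup.of (k-1) ∈
            Subgroup.closure (FreeGroup.of '' {m : ℕ | 1 ≤ m ∧ m < k + 1}) :=
          Subgroup.subset_closure ⟨k-1, ⟨by omega, by omega⟩, rfl⟩
        have mb : FreeGroup.of k ∈
            Subgroup.closure (FreeGroup.of '' {m : ℕ | 1 ≤ m ∧ m < k + 1}) :=
          Subgroup.subset_closure ⟨k, ⟨by omega, by omega⟩, rfl⟩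
        exact mul_mem (mul_mem (mul_mem (mul_mem (inv_mem ma) (inv_mem mb)) ma) mb) ma
      · rw [if_neg h]
        exact Subgroup.subset_closure ⟨m, ⟨h1, by omega⟩, rfl⟩

end Hang

/-- Killing the generator `xᵢ` (for `1 ≤ i ≤ k-1`) sends `g_k` into the subgroup
generated by `x₁, …, x_{i-1}`: removing the nail `Nᵢ` disentangles the rope from
every nail above `Nᵢ` in the order `N₁ ≺ N₂ ≺ ⋯ ≺ N_{k-1} ≺ N₀`. -/
theorem stmt13 (k i : ℕ) (hk : 2 ≤ k) (hi1 : 1 ≤ i) (hik : i ≤ k - 1) :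
    (FreeGroup.lift fun m => if m = i then (1 : FreeGroup ℕ) else FreeGroup.of m)
        (hangG k) ∈
      Subgroup.closure (FreeGroup.of '' {m : ℕ | 1 ≤ m ∧ m < i}) := by
  rcases eq_or_lt_of_le hk with h2 | h3
  · obtain rfl : k = 2 := h2.symm
    obtain rfl : i = 1 := by omega
    have e2 : hangG 2 = FreeGroup.of 0 * (FreeGroup.of 1)⁻¹ * (FreeGroup.of 0)⁻¹ := rfl
    show Hang.rho 1 (hangG 2) ∈ _
    have h : Hang.rho 1 (hangG 2) = 1 := by
      simp only [e2, map_mul, map_inv, Hang.rho_of]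
      norm_num
    rw [h]; exact one_mem _
  · exact (Hang.main k h3).1 i hi1 hik
end

section
/- For every k ≥ 2, the reduced word of g_k has length exactly 3 + (k−2)·2^{k−1}; that is, g_k is a product of 3 + (k−2)·2^{k−1} generators and inverses of generators, and no shorter such product represents g_k. -/
/-!
The word of `g_k` is computed explicitly: `φ_k` replaces each letter `x_{k-1}^{±1}` by a word of
length `2k+1` that begins with `x_k⁻¹`, ends with `x_k`, and has no two adjacent letters on the same
generator. If the word of `g_k` is reduced, uses only `x₀, …, x_{k-1}`, and never has two
adjacent letters on `x_{k-1}`, then no cancellation occurs at the junctions, and the word of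
`g_{k+1}` has the same three properties with `x_k` in place of `x_{k-1}`. Each letter `x_{k-1}^{±1}`
produces two letters `x_k^{±1}`, so `g_k` contains `2^(k-2)` of them, and the length grows by
`2k · 2^(k-2)` at each step.
-/

namespace FreeGroup

variable {α β : Type*}

theorem mk_singleton (p : α × Bool) : mk [p] = cond p.2 (of p.1) (of p.1)⁻¹ := by
  rw [← lift_of_apply (mk [p]), lift_mk, List.map_singleton, List.prod_singleton]

theorem mk_map_true (L : List α) : mk (L.map (·, true)) = (L.map of).prod := by
  induction L with
  | nil => rfl
  | cons a L ih =>
    rw [List.map_cons, List.map_cons, List.prod_cons, ← ih, ← List.singleton_append, ← mul_mk]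
    rfl

theorem map_mk_eq_mk_flatMap (φ : FreeGroup α →* FreeGroup β) (s : α × Bool → List (β × Bool))
    (hs : ∀ p, mk (s p) = φ (mk [p])) (L : List (α × Bool)) : φ (mk L) = mk (L.flatMap s) := by
  induction L with
  | nil => exact φ.map_one
  | cons p L ih =>
    rw [List.flatMap_cons, ← mul_mk, ← ih, hs, ← List.singleton_append, ← mul_mk, _root_.map_mul]

end FreeGroup

namespace PictureHanging

open FreeGroup

def ascInv (k : ℕ) : List (ℕ × Bool) := (List.range (k - 1)).map (·, false)

def desc (k : ℕ) : List (ℕ × Bool) := (List.range (k - 1)).reverse.map (·, true)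

-- Spells `φ_k (x_{k-1}^{±1})`; flipping the middle letter gives the inverse word.
def chunk (k : ℕ) (b : Bool) : List (ℕ × Bool) :=
  (k, false) :: ascInv k ++ (k - 1, b) :: desc k ++ [(k, true)]

def substLetter (k : ℕ) (p : ℕ × Bool) : List (ℕ × Bool) :=
  if p.1 = k - 1 then chunk k p.2 else [p]

def hangWord : ℕ → List (ℕ × Bool)
  | 0 => []
  | 1 => []
  | 2 => [(0, true), (1, false), (0, false)]
  | 3 => [(0, true), (2, false), (0, false), (1, false), (0, true), (2, true), (0, false)]
  | k + 4 => (hangWord (k + 3)).flatMap (substLetter (k + 3))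

theorem hangWord_succ {k : ℕ} (hk : 3 ≤ k) :
    hangWord (k + 1) = (hangWord k).flatMap (substLetter k) := by
  obtain ⟨n, rfl⟩ := Nat.exists_eq_add_of_le' hk
  rfl

theorem invRev_desc (k : ℕ) : invRev (desc k) = ascInv k := by
  simp [invRev, desc, ascInv, List.map_reverse, Function.comp_def]

theorem invRev_chunk_true (k : ℕ) : invRev (chunk k true) = chunk k false := by
  rw [chunk, chunk, ← invRev_desc]
  simp [invRev, List.map_reverse, Function.comp_def]

theorem mk_desc {k : ℕ} (hk : 2 ≤ k) : mk (desc k) = hangDesc k * of 0 := by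
  obtain ⟨n, rfl⟩ := Nat.exists_eq_add_of_le' hk
  have hrev : (List.range (n + 1)).reverse = (List.range (n + 1)).map (n - ·) := by
    simpa [← List.range_eq_range'] using List.reverse_range' (s := 0) (n := n + 1)
  rw [desc, hangDesc, show n + 2 - 1 = n + 1 by omega, show n + 2 - 2 = n by omega, hrev,
    List.range_succ, List.map_append, List.map_append, ← mul_mk, mk_map_true, List.map_map]
  simp only [Function.comp_def, List.map_cons, tsub_self, List.map_nil, mul_right_inj]
  rfl

theorem mk_chunk_true {k : ℕ} (hk : 2 ≤ k) : mk (chunk k true) = hangSub k := by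
  change mk ([(k, false)] ++ ascInv k ++ ([(k - 1, true)] ++ desc k) ++ [(k, true)]) = _
  simp only [← mul_mk, ← invRev_desc, ← inv_mk, mk_desc hk, mk_singleton, cond_true, cond_false,
    hangSub]
  group

theorem mk_substLetter {k : ℕ} (hk : 2 ≤ k) (p : ℕ × Bool) :
    mk (substLetter k p) = hangPhi k (mk [p]) := by
  obtain ⟨m, b⟩ := p
  rw [substLetter, mk_singleton, hangPhi]
  dsimp only
  split_ifs with hm
  · cases b
    · rw [← invRev_chunk_true, ← inv_mk, mk_chunk_true hk]
      simp [hm]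
    · simp [mk_chunk_true hk, hm]
  · cases b <;> simp [mk_singleton, hm]

theorem hangPhi_mk {k : ℕ} (hk : 2 ≤ k) (L : List (ℕ × Bool)) :
    hangPhi k (mk L) = mk (L.flatMap (substLetter k)) :=
  map_mk_eq_mk_flatMap _ _ (mk_substLetter hk) L

theorem mk_hangWord : ∀ k, mk (hangWord k) = hangG k
  | 0 | 1 => rfl
  | 2 | 3 => by decide
  | k + 4 => by rw [hangWord, ← hangPhi_mk (by omega), mk_hangWord (k + 3), hangG]

-- The second clause is what survives the substitution: a chunk ends in `x_k` and the next one
-- would begin with `x_k⁻¹`.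
def IsReducedIsolated (t : ℕ) (L : List (ℕ × Bool)) : Prop :=
  L.IsChain fun p q => (p.1 = q.1 → p.2 = q.2) ∧ (p.1 = t → q.1 ≠ t)

theorem IsReducedIsolated.isReduced {t : ℕ} {L : List (ℕ × Bool)} (h : IsReducedIsolated t L) :
    IsReduced L :=
  h.imp fun _ _ h => h.1

theorem isChain_chunk {k : ℕ} (hk : 2 ≤ k) (b : Bool) :
    (chunk k b).IsChain fun p q => p.1 ≠ q.1 := by
  have of_nodup (l : List (ℕ × Bool)) (h : (l.map Prod.fst).Nodup) :
      l.IsChain fun p q => p.1 ≠ q.1 :=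
    (List.isChain_map Prod.fst).1 (List.Pairwise.isChain h)
  obtain ⟨n, rfl⟩ := Nat.exists_eq_add_of_le' hk
  rw [chunk, List.append_assoc]
  refine List.isChain_append.2 ⟨of_nodup _ ?_, of_nodup _ ?_, ?_⟩
  · simp [ascInv, Function.comp_def, List.nodup_range]
  · simp [desc, Function.comp_def, List.nodup_append, List.nodup_range]
    omega
  · simp [ascInv, List.range_succ, List.getLast?_cons, List.getLast?_append]

theorem fst_le_of_mem_chunk {k : ℕ} {b : Bool} {p : ℕ × Bool} (hp : p ∈ chunk k b) : p.1 ≤ k := by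
  simp only [chunk, ascInv, desc, List.mem_append, List.mem_cons, List.mem_map, List.mem_reverse,
    List.mem_range, List.not_mem_nil, or_false] at hp
  rcases hp with ((rfl | ⟨j, hj, rfl⟩) | (rfl | ⟨j, hj, rfl⟩)) | rfl <;> dsimp only <;> omega

theorem substLetter_ne_nil (k : ℕ) (p : ℕ × Bool) : substLetter k p ≠ [] := by
  unfold substLetter
  split_ifs <;> simp [chunk]

theorem head?_substLetter (k : ℕ) (p : ℕ × Bool) :
    (substLetter k p).head? = some (if p.1 = k - 1 then (k, false) else p) := by
  unfold substLetter
  split_ifs <;> rfl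

theorem getLast?_substLetter (k : ℕ) (p : ℕ × Bool) :
    (substLetter k p).getLast? = some (if p.1 = k - 1 then (k, true) else p) := by
  unfold substLetter
  split_ifs
  · exact List.getLast?_concat
  · rfl

theorem IsReducedIsolated.flatMap_substLetter {k : ℕ} (hk : 2 ≤ k) {L : List (ℕ × Bool)}
    (h : IsReducedIsolated (k - 1) L) (hL : ∀ p ∈ L, p.1 < k) :
    IsReducedIsolated k (L.flatMap (substLetter k)) := by
  rw [IsReducedIsolated, List.flatMap_def, List.isChain_flatten (by simp [substLetter_ne_nil]),
    List.isChain_map]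
  refine ⟨?_, h.imp_of_mem_imp fun p q hp hq hpq => ?_⟩
  · simp only [List.mem_map]
    rintro _ ⟨p, -, rfl⟩
    unfold substLetter
    split_ifs
    · exact (isChain_chunk hk _).imp fun q r h =>
        ⟨fun e => absurd e h, fun e e' => h (e.trans e'.symm)⟩
    · exact List.isChain_singleton _
  · have := hL p hp
    have := hL q hq
    simp only [getLast?_substLetter, head?_substLetter, Option.mem_some_iff, forall_eq']
    split_ifs <;> simp_all <;> omega

theorem fst_lt_of_mem_hangWord : ∀ k, ∀ p ∈ hangWord k, p.1 < k
  | 0 | 1 => by simp [hangWord]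
  | 2 | 3 => by decide
  | k + 4 => by
    intro p h
    obtain ⟨q, hq, hpq⟩ := List.mem_flatMap.1 h
    have := fst_lt_of_mem_hangWord _ q hq
    unfold substLetter at hpq
    split_ifs at hpq
    · have := fst_le_of_mem_chunk hpq; omega
    · rw [List.mem_singleton.1 hpq]; omega

theorem isReducedIsolated_hangWord {k : ℕ} (hk : 3 ≤ k) :
    IsReducedIsolated (k - 1) (hangWord k) := by
  induction k, hk using Nat.le_induction with
  | base => unfold IsReducedIsolated; decide
  | succ k hk ih =>
    rw [hangWord_succ hk]
    exact ih.flatMap_substLetter (by omega) (fst_lt_of_mem_hangWord k)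

theorem length_flatMap_substLetter {k : ℕ} (hk : 1 ≤ k) (L : List (ℕ × Bool)) :
    (L.flatMap (substLetter k)).length = L.length + 2 * k * L.countP (·.1 = k - 1) := by
  induction L with
  | nil => rfl
  | cons p L ih =>
    by_cases hp : p.1 = k - 1
    · simp [substLetter, hp, chunk, ascInv, desc, ih, Nat.mul_add]
      omega
    · simp [substLetter, hp, ih]
      ring

theorem countP_chunk {k : ℕ} (hk : 1 ≤ k) (b : Bool) : (chunk k b).countP (·.1 = k) = 2 := by
  have hrange : (List.range (k - 1)).countP (· = k) = 0 :=
    List.countP_eq_zero.2 fun j hj => by simp at hj ⊢; omega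
  simp [chunk, ascInv, desc, Function.comp_def, hrange, show k - 1 ≠ k by omega]

theorem countP_flatMap_substLetter {k : ℕ} (hk : 1 ≤ k) {L : List (ℕ × Bool)}
    (hL : ∀ p ∈ L, p.1 < k) :
    (L.flatMap (substLetter k)).countP (·.1 = k) = 2 * L.countP (·.1 = k - 1) := by
  induction L with
  | nil => rfl
  | cons p L ih =>
    have hpk : p.1 ≠ k := (hL p List.mem_cons_self).ne
    rw [List.flatMap_cons, List.countP_append, ih fun q hq => hL q (List.mem_cons_of_mem p hq)]
    by_cases hp : p.1 = k - 1
    · simp [substLetter, hp, countP_chunk hk]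
      ring
    · simp [substLetter, hp, hpk]

theorem countP_hangWord {k : ℕ} (hk : 3 ≤ k) :
    (hangWord k).countP (·.1 = k - 1) = 2 ^ (k - 2) := by
  induction k, hk using Nat.le_induction with
  | base => decide
  | succ k hk ih =>
    rw [hangWord_succ hk, Nat.add_sub_cancel,
      countP_flatMap_substLetter (by omega) (fst_lt_of_mem_hangWord k), ih,
      show k + 1 - 2 = k - 2 + 1 by omega, pow_succ]
    ring

theorem length_hangWord {k : ℕ} (hk : 3 ≤ k) :
    (hangWord k).length = 3 + (k - 2) * 2 ^ (k - 1) := by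
  induction k, hk using Nat.le_induction with
  | base => rfl
  | succ k hk ih =>
    rw [hangWord_succ hk, length_flatMap_substLetter (by omega), ih, countP_hangWord hk]
    obtain ⟨n, rfl⟩ := Nat.exists_eq_add_of_le' hk
    simp only [show n + 3 - 2 = n + 1 by omega, show n + 3 - 1 = n + 2 by omega,
      show n + 3 + 1 - 2 = n + 2 by omega, show n + 3 + 1 - 1 = n + 3 by omega]
    ring

end PictureHanging

/-- The reduced word of `g_k` has length exactly `3 + (k-2)·2^(k-1)`; equivalently,
this is the minimal number of generators and inverses of generators needed to
express `g_k`. -/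
theorem stmt15 (k : ℕ) (hk : 2 ≤ k) :
    (hangG k).toWord.length = 3 + (k - 2) * 2 ^ (k - 1) := by
  obtain rfl | hk := hk.eq_or_lt
  · decide
  rw [← PictureHanging.mk_hangWord, FreeGroup.toWord_mk,
    (PictureHanging.isReducedIsolated_hangWord hk).isReduced.reduce_eq,
    PictureHanging.length_hangWord hk]
end
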